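/- arXiv:1405.2307 — 2 statements merged into one kernel-verified Lean document; each statement's English description precedes it below -/
import Mathlib

section
/- Let A and B be closed, densely defined operators in H with dom B = dom A such that B − A is A-compact, i.e. B − A is compact as a mapping from dom A equipped with the graph norm ‖x‖_A = (‖x‖² + ‖Ax‖²)^{1/2} into H. Then σ_{π+}(A) ∪ r̃(A) = σ_{π+}(B) ∪ r̃(B) and σ_{π−}(A) ∪ r̃(A) = σ_{π−}(B) ∪ r̃(B) (as subsets of ℂ̄); moreover ∞ ∈ σ_{++}(A) iff ∞ ∈ σ_{++}(B), ∞ ∈ σ_{−−}(A) iff ∞ ∈ σ_{−−}(B), and ∞ ∈ r̃(A) iff ∞ ∈ r̃(B). -/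
open Filter Topology OnePoint Set

noncomputable section

namespace Paper

variable {H : Type*} [NormedAddCommGroup H] [InnerProductSpace ℂ H]

/-- The indefinite inner product `[x,y] := (Gx, y)` induced by the Gram operator `G`. -/
def brk (G : H →L[ℂ] H) (x y : H) : ℂ := inner ℂ (G x) y

/-- The real part of `[x,y]`; note that `[x,x]` is real when `G` is selfadjoint. -/
def brkRe (G : H →L[ℂ] H) (x y : H) : ℝ := (brk G x y).re

/-- A linear manifold of finite codimension in `H`. -/
def FinCodim (M : Submodule ℂ H) : Prop := FiniteDimensional ℂ (H ⧸ M)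

/-- An approximate eigensequence of `A` at the finite point `l`. -/
def IsApproxSeq (A : H →ₗ.[ℂ] H) (l : ℂ) (x : ℕ → A.domain) : Prop :=
  (∀ n, ‖(x n : H)‖ = 1) ∧
    Tendsto (fun n => A (x n) - l • ((x n : H))) atTop (𝓝 0)

/-- The approximate point spectrum of `A`. -/
def sigmaAp (A : H →ₗ.[ℂ] H) : Set ℂ := {l | ∃ x : ℕ → A.domain, IsApproxSeq A l x}

/-- The type `π₊` condition at `l` relative to the linear manifold `M`. -/
def PiPlusCond (G : H →L[ℂ] H) (A : H →ₗ.[ℂ] H) (l : ℂ) (M : Submodule ℂ H) : Prop :=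
  ∀ x : ℕ → A.domain, (∀ n, (x n : H) ∈ M) → IsApproxSeq A l x →
    0 < atTop.liminf (fun n => brkRe G (x n) (x n))

/-- The type `π₋` condition at `l` relative to the linear manifold `M`. -/
def PiMinusCond (G : H →L[ℂ] H) (A : H →ₗ.[ℂ] H) (l : ℂ) (M : Submodule ℂ H) : Prop :=
  ∀ x : ℕ → A.domain, (∀ n, (x n : H) ∈ M) → IsApproxSeq A l x →
    atTop.limsup (fun n => brkRe G (x n) (x n)) < 0

/-- `l` is a spectral point of type `π₊` of `A`. -/
def sigmaPiPlusAt (G : H →L[ℂ] H) (A : H →ₗ.[ℂ] H) (l : ℂ) : Prop :=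
  l ∈ sigmaAp A ∧ ∃ M : Submodule ℂ H, FinCodim M ∧ PiPlusCond G A l M

/-- `l` is a spectral point of type `π₋` of `A`. -/
def sigmaPiMinusAt (G : H →L[ℂ] H) (A : H →ₗ.[ℂ] H) (l : ℂ) : Prop :=
  l ∈ sigmaAp A ∧ ∃ M : Submodule ℂ H, FinCodim M ∧ PiMinusCond G A l M

/-- `l` is a spectral point of positive type of `A`. -/
def sigmaPPAt (G : H →L[ℂ] H) (A : H →ₗ.[ℂ] H) (l : ℂ) : Prop :=
  l ∈ sigmaAp A ∧ PiPlusCond G A l ⊤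

/-- `l` is a spectral point of negative type of `A`. -/
def sigmaMMAt (G : H →L[ℂ] H) (A : H →ₗ.[ℂ] H) (l : ℂ) : Prop :=
  l ∈ sigmaAp A ∧ PiMinusCond G A l ⊤

/-- An approximate eigensequence of `A` at `∞`. -/
def IsInftyApproxSeq (A : H →ₗ.[ℂ] H) (x : ℕ → A.domain) : Prop :=
  (∀ n, ‖A (x n)‖ = 1) ∧ Tendsto (fun n => ((x n : H))) atTop (𝓝 0)

/-- `A` is a bounded operator. -/
def IsBoundedOp (A : H →ₗ.[ℂ] H) : Prop := ∃ C : ℝ, ∀ x : A.domain, ‖A x‖ ≤ C * ‖(x : H)‖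

/-- The type `π₊` condition at `∞` relative to the linear manifold `M`. -/
def InftyPiPlusCond (G : H →L[ℂ] H) (A : H →ₗ.[ℂ] H) (M : Submodule ℂ H) : Prop :=
  ∀ x : ℕ → A.domain, (∀ n, (x n : H) ∈ M) → IsInftyApproxSeq A x →
    0 < atTop.liminf (fun n => brkRe G (A (x n)) (A (x n)))

/-- The type `π₋` condition at `∞` relative to the linear manifold `M`. -/
def InftyPiMinusCond (G : H →L[ℂ] H) (A : H →ₗ.[ℂ] H) (M : Submodule ℂ H) : Prop :=
  ∀ x : ℕ → A.domain, (∀ n, (x n : H) ∈ M) → IsInftyApproxSeq A x →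
    atTop.limsup (fun n => brkRe G (A (x n)) (A (x n))) < 0

/-- `∞` is a spectral point of type `π₊` of `A`. -/
def sigmaPiPlusInfty (G : H →L[ℂ] H) (A : H →ₗ.[ℂ] H) : Prop :=
  ¬ IsBoundedOp A ∧ ∃ M : Submodule ℂ H, FinCodim M ∧ InftyPiPlusCond G A M

/-- `∞` is a spectral point of type `π₋` of `A`. -/
def sigmaPiMinusInfty (G : H →L[ℂ] H) (A : H →ₗ.[ℂ] H) : Prop :=
  ¬ IsBoundedOp A ∧ ∃ M : Submodule ℂ H, FinCodim M ∧ InftyPiMinusCond G A M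

/-- `∞` is a spectral point of positive type of `A`. -/
def sigmaPPInfty (G : H →L[ℂ] H) (A : H →ₗ.[ℂ] H) : Prop :=
  ¬ IsBoundedOp A ∧ InftyPiPlusCond G A ⊤

/-- `∞` is a spectral point of negative type of `A`. -/
def sigmaMMInfty (G : H →L[ℂ] H) (A : H →ₗ.[ℂ] H) : Prop :=
  ¬ IsBoundedOp A ∧ InftyPiMinusCond G A ⊤

/-- A subset of the Riemann sphere `ℂ̄ = ℂ ∪ {∞}` given by a condition at finite
points and a condition at `∞`. -/
def extSet (Pf : ℂ → Prop) (Pinf : Prop) : Set (OnePoint ℂ) :=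
  {p | (∃ l : ℂ, p = (l : OnePoint ℂ) ∧ Pf l) ∨ (p = ∞ ∧ Pinf)}

/-- The extended approximate point spectrum `σ̃_ap(A) ⊆ ℂ̄`. -/
def extSigmaAp (A : H →ₗ.[ℂ] H) : Set (OnePoint ℂ) :=
  extSet (fun l => l ∈ sigmaAp A) (¬ IsBoundedOp A)

/-- The set `σ_{π+}(A) ⊆ ℂ̄`. -/
def extPiPlus (G : H →L[ℂ] H) (A : H →ₗ.[ℂ] H) : Set (OnePoint ℂ) :=
  extSet (sigmaPiPlusAt G A) (sigmaPiPlusInfty G A)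

/-- The set `σ_{π−}(A) ⊆ ℂ̄`. -/
def extPiMinus (G : H →L[ℂ] H) (A : H →ₗ.[ℂ] H) : Set (OnePoint ℂ) :=
  extSet (sigmaPiMinusAt G A) (sigmaPiMinusInfty G A)

/-- The set `σ_{++}(A) ⊆ ℂ̄`. -/
def extPP (G : H →L[ℂ] H) (A : H →ₗ.[ℂ] H) : Set (OnePoint ℂ) :=
  extSet (sigmaPPAt G A) (sigmaPPInfty G A)

/-- The set `σ_{−−}(A) ⊆ ℂ̄`. -/
def extMM (G : H →L[ℂ] H) (A : H →ₗ.[ℂ] H) : Set (OnePoint ℂ) :=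
  extSet (sigmaMMAt G A) (sigmaMMInfty G A)

/-- The extended set of points of regular type, `r̃(A) = ℂ̄ \ σ̃_ap(A)`. -/
def extReg (A : H →ₗ.[ℂ] H) : Set (OnePoint ℂ) := (extSigmaAp A)ᶜ

/-- `A` is `G`-symmetric: `[Ax,y] = [x,Ay]` for `x, y ∈ dom A`. -/
def GSymm (G : H →L[ℂ] H) (A : H →ₗ.[ℂ] H) : Prop :=
  ∀ x y : A.domain, brk G (A x) (y : H) = brk G (x : H) (A y)

/-- A bounded operator `T` is `G`-symmetric (equivalently, `G`-selfadjoint):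
`[Tx,y] = [x,Ty]` for all `x, y`. -/
def GSymmB (G T : H →L[ℂ] H) : Prop := ∀ x y : H, brk G (T x) y = brk G x (T y)

/-- `l ∈ ρ(A)`: the operator `A − l` maps `dom A` bijectively onto `H`
with a bounded inverse. -/
def InResolventSet (A : H →ₗ.[ℂ] H) (l : ℂ) : Prop :=
  (∀ y : H, ∃ x : A.domain, A x - l • (x : H) = y) ∧
  ∃ c : ℝ, 0 < c ∧ ∀ x : A.domain, c * ‖(x : H)‖ ≤ ‖A x - l • (x : H)‖

/-- The spectrum `σ(A) = ℂ \ ρ(A)`. -/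
def spectrumSet (A : H →ₗ.[ℂ] H) : Set ℂ := {l | ¬ InResolventSet A l}

/-- `ker (A − l)` as a submodule of `H`. -/
def kerAt (A : H →ₗ.[ℂ] H) (l : ℂ) : Submodule ℂ H where
  carrier := {x | ∃ hx : x ∈ A.domain, A ⟨x, hx⟩ = l • x}
  zero_mem' := ⟨A.domain.zero_mem, by
    have : (⟨(0 : H), A.domain.zero_mem⟩ : A.domain) = 0 := rfl
    rw [this, A.map_zero, smul_zero]⟩
  add_mem' := by
    rintro a b ⟨ha, ea⟩ ⟨hb, eb⟩
    refine ⟨A.domain.add_mem ha hb, ?_⟩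
    have : (⟨a + b, A.domain.add_mem ha hb⟩ : A.domain) = ⟨a, ha⟩ + ⟨b, hb⟩ := rfl
    rw [this, A.map_add, ea, eb, smul_add]
  smul_mem' := by
    rintro c x ⟨hx, ex⟩
    refine ⟨A.domain.smul_mem c hx, ?_⟩
    have : (⟨c • x, A.domain.smul_mem c hx⟩ : A.domain) = c • (⟨x, hx⟩ : A.domain) := rfl
    rw [this, A.map_smul, ex, smul_comm]

/-- The range of `A − l`. -/
def ranAt (A : H →ₗ.[ℂ] H) (l : ℂ) : Set H :=
  {y | ∃ x : A.domain, A x - l • (x : H) = y}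

/-- A uniformly positive subspace. -/
def IsUnifPos (G : H →L[ℂ] H) (L : Submodule ℂ H) : Prop :=
  ∃ δ : ℝ, 0 < δ ∧ ∀ x ∈ L, δ * ‖x‖ ^ 2 ≤ brkRe G x x

/-- A uniformly negative subspace. -/
def IsUnifNeg (G : H →L[ℂ] H) (L : Submodule ℂ H) : Prop :=
  ∃ δ : ℝ, 0 < δ ∧ ∀ x ∈ L, δ * ‖x‖ ^ 2 ≤ -brkRe G x x

/-- A positive set: every nonzero element `x` has `[x,x] > 0`. -/
def IsPosSet (G : H →L[ℂ] H) (S : Set H) : Prop := ∀ x ∈ S, x ≠ 0 → 0 < brkRe G x x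

/-- A negative set: every nonzero element `x` has `[x,x] < 0`. -/
def IsNegSet (G : H →L[ℂ] H) (S : Set H) : Prop := ∀ x ∈ S, x ≠ 0 → brkRe G x x < 0

/-- The orthogonal companion `L^{[⊥]}` of `L` with respect to `[·,·]`. -/
def orthCompanion (G : H →L[ℂ] H) (L : Submodule ℂ H) : Submodule ℂ H where
  carrier := {x | ∀ y ∈ L, brk G x y = 0}
  zero_mem' := by intro y hy; simp [brk]
  add_mem' := by
    intro a b ha hb y hy
    simp only [brk, map_add, inner_add_left] at *
    rw [ha y hy, hb y hy, add_zero]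
  smul_mem' := by
    intro c x hx y hy
    simp only [brk, _root_.map_smul, inner_smul_left] at *
    rw [hx y hy, mul_zero]

/-- The isotropic part `L° = L ∩ L^{[⊥]}` of `L`. -/
def isoPart (G : H →L[ℂ] H) (L : Submodule ℂ H) : Submodule ℂ H := L ⊓ orthCompanion G L

/-- A fundamental decomposition `L = L₊ [∔] L₋ [∔] L°` of `L`. -/
def IsFundDecomp (G : H →L[ℂ] H) (L Lp Lm L0 : Submodule ℂ H) : Prop :=
  Lp ≤ L ∧ Lm ≤ L ∧ L0 = isoPart G L ∧
  IsPosSet G (Lp : Set H) ∧ IsNegSet G (Lm : Set H) ∧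
  (∀ x ∈ Lp, ∀ y ∈ Lm, brk G x y = 0) ∧
  (∀ x ∈ L, ∃ p ∈ Lp, ∃ m ∈ Lm, ∃ z ∈ L0, x = p + m + z) ∧
  (∀ p ∈ Lp, ∀ m ∈ Lm, ∀ z ∈ L0, p + m + z = 0 → p = 0 ∧ m = 0 ∧ z = 0)

/-- A Jordan chain `x 0, …, x (n-1)` of `A` at `l` of length `n`. -/
def IsJordanChain (A : H →ₗ.[ℂ] H) (l : ℂ) (n : ℕ) (x : ℕ → A.domain) : Prop :=
  0 < n ∧ (∀ i < n, (x i : H) ≠ 0) ∧ A (x 0) = l • ((x 0 : H)) ∧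
  ∀ i, i + 1 < n → A (x (i + 1)) = l • ((x (i + 1) : H)) + (x i : H)

/-- A Jordan chain of `A` at `l` of infinite length. -/
def IsInfJordanChain (A : H →ₗ.[ℂ] H) (l : ℂ) (x : ℕ → A.domain) : Prop :=
  (∀ n, (x n : H) ≠ 0) ∧ A (x 0) = l • ((x 0 : H)) ∧
  ∀ n, A (x (n + 1)) = l • ((x (n + 1) : H)) + (x n : H)

/-- The algebraic eigenspace `L_λ(A) = ⋃ₙ ker (A − λ)ⁿ`. -/
def algEig (A : H →ₗ.[ℂ] H) (l : ℂ) : Set H :=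
  {x | ∃ n : ℕ, ∃ c : ℕ → H, c 0 = 0 ∧ c n = x ∧
    ∀ i < n, ∃ h : c (i + 1) ∈ A.domain, A ⟨c (i + 1), h⟩ = l • c (i + 1) + c i}

/-- The bounded operator `B` commutes with `A`, i.e. `BA ⊆ AB`. -/
def CommutesWith (B : H →L[ℂ] H) (A : H →ₗ.[ℂ] H) : Prop :=
  ∀ x : A.domain, ∃ h : B (x : H) ∈ A.domain, A ⟨B (x : H), h⟩ = B (A x)

/-- `R` is the (everywhere defined, bounded) resolvent of `A` at `μ`. -/
def IsResolventOf (A : H →ₗ.[ℂ] H) (mu : ℂ) (R : H →L[ℂ] H) : Prop :=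
  (∀ y : H, ∃ h : R y ∈ A.domain, A ⟨R y, h⟩ - mu • R y = y) ∧
  (∀ x : A.domain, R (A x - mu • (x : H)) = (x : H))

/-- The system `𝓜(I)` of all finite unions of bounded intervals whose closure
is contained in `I`. -/
def MSet (I : Set ℝ) : Set (Set ℝ) :=
  {D | ∃ F : Finset (Set ℝ),
    (∀ J ∈ F, J.OrdConnected ∧ Bornology.IsBounded J ∧ closure J ⊆ I) ∧ D = ⋃₀ ↑F}

/-- The system `𝓜_S(I)`: elements of `𝓜(I)` whose boundary does not meet `S`. -/
def MSetS (I : Set ℝ) (S : Set ℝ) : Set (Set ℝ) :=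
  {D | D ∈ MSet I ∧ frontier D ∩ S = ∅}

/-- `l` belongs to the resolvent set of the restriction `A|L` of `A`
to the (`A`-invariant) subspace `L`. -/
def InResolventRestr (A : H →ₗ.[ℂ] H) (L : Submodule ℂ H) (l : ℂ) : Prop :=
  (∀ x : A.domain, (x : H) ∈ L → A x - l • (x : H) ∈ L) ∧
  (∀ y ∈ L, ∃ x : A.domain, (x : H) ∈ L ∧ A x - l • (x : H) = y) ∧
  ∃ c : ℝ, 0 < c ∧ ∀ x : A.domain, (x : H) ∈ L → c * ‖(x : H)‖ ≤ ‖A x - l • (x : H)‖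

/-- The spectrum of the restriction `A|L`. -/
def specRestr (A : H →ₗ.[ℂ] H) (L : Submodule ℂ H) : Set ℂ :=
  {l | ¬ InResolventRestr A L l}

/-- The closure of `S ∩ dom A` with respect to the graph norm of `A`. -/
def graphClosure (A : H →ₗ.[ℂ] H) (S : Set H) : Set H :=
  {x | ∃ hx : x ∈ A.domain, ((x, A ⟨x, hx⟩) : H × H) ∈
    closure {p : H × H | ∃ hy : p.1 ∈ A.domain, p.1 ∈ S ∧ A ⟨p.1, hy⟩ = p.2}}

/-- The sum `A + F` of `A` and a bounded operator `F`, with domain `dom A`. -/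
def addCLM (A : H →ₗ.[ℂ] H) (F : H →L[ℂ] H) : H →ₗ.[ℂ] H :=
  ⟨A.domain, A.toFun + (F.toLinearMap.comp A.domain.subtype)⟩

/-- The composition `G ∘ A` as a partially defined operator with domain `dom A`. -/
def compCLM (G : H →L[ℂ] H) (A : H →ₗ.[ℂ] H) : H →ₗ.[ℂ] H :=
  ⟨A.domain, G.toLinearMap.comp A.toFun⟩

/-- A map `f` defined on `dom A` is `A`-compact: any sequence bounded in the graph
norm of `A` has a subsequence whose image under `f` converges. -/
def IsACompact (A : H →ₗ.[ℂ] H) (f : A.domain → H) : Prop :=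
  ∀ x : ℕ → A.domain, (∃ C : ℝ, ∀ n, ‖(x n : H)‖ + ‖A (x n)‖ ≤ C) →
    ∃ φ : ℕ → ℕ, StrictMono φ ∧ ∃ y : H, Tendsto (fun n => f (x (φ n))) atTop (𝓝 y)

/-- `(L, [·,·])` is a Hilbert space: `[·,·]` is positive definite on `L` and `L` is
complete with respect to the induced norm. -/
def IsHilbertWrt (G : H →L[ℂ] H) (L : Submodule ℂ H) : Prop :=
  IsPosSet G (L : Set H) ∧
  ∀ u : ℕ → H, (∀ n, u n ∈ L) →
    (∀ ε : ℝ, 0 < ε → ∃ N, ∀ m ≥ N, ∀ n ≥ N, brkRe G (u m - u n) (u m - u n) < ε) →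
    ∃ v ∈ L, Tendsto (fun n => brkRe G (u n - v) (u n - v)) atTop (𝓝 0)

/-- `(L, −[·,·])` is a Hilbert space. -/
def IsAntiHilbertWrt (G : H →L[ℂ] H) (L : Submodule ℂ H) : Prop :=
  IsNegSet G (L : Set H) ∧
  ∀ u : ℕ → H, (∀ n, u n ∈ L) →
    (∀ ε : ℝ, 0 < ε → ∃ N, ∀ m ≥ N, ∀ n ≥ N, -brkRe G (u m - u n) (u m - u n) < ε) →
    ∃ v ∈ L, Tendsto (fun n => brkRe G (u n - v) (u n - v)) atTop (𝓝 0)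


/-- The sequence `x` converges weakly to `0` in `H`. -/
def WeakNullSeq (x : ℕ → H) : Prop :=
  ∀ y : H, Tendsto (fun n => (inner ℂ y (x n) : ℂ)) atTop (𝓝 0)

/-! ### Auxiliary lemmas for Statement 10 -/

section Statement10Aux

local notation "⟪" x ", " y "⟫" => @inner ℂ _ _ x y

lemma abs_re_le_norm' (z : ℂ) : |z.re| ≤ ‖z‖ := Complex.abs_re_le_norm z

lemma abs_brkRe_le (G : H →L[ℂ] H) (x : H) : |brkRe G x x| ≤ ‖G‖ * (‖x‖ * ‖x‖) := by
  refine (abs_re_le_norm' _).trans ?_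
  refine (norm_inner_le_norm (G x) x).trans ?_
  have h := G.le_opNorm x
  nlinarith [norm_nonneg x, norm_nonneg (G x), norm_nonneg G]

lemma brkRe_real_smul (G : H →L[ℂ] H) (t : ℝ) (x : H) :
    brkRe G ((t : ℂ) • x) ((t : ℂ) • x) = t ^ 2 * brkRe G x x := by
  have h : brk G ((t : ℂ) • x) ((t : ℂ) • x) = ((t ^ 2 : ℝ) : ℂ) * brk G x x := by
    simp only [brk, _root_.map_smul, inner_smul_left, inner_smul_right, Complex.conj_ofReal]
    push_cast
    ring
  rw [brkRe, h]
  simp [Complex.mul_re, ← Complex.ofReal_pow, brkRe]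

lemma abs_brkRe_sub_le (G : H →L[ℂ] H) (u v : H) :
    |brkRe G u u - brkRe G v v| ≤ ‖G‖ * (‖u - v‖ * (‖u‖ + ‖v‖)) := by
  have key : brk G u u - brk G v v = ⟪G u, u - v⟫ + ⟪G (u - v), v⟫ := by
    simp only [inner_sub_right, map_sub, inner_sub_left, brk]
    ring
  have h1 : |brkRe G u u - brkRe G v v| ≤ ‖brk G u u - brk G v v‖ := by
    rw [brkRe, brkRe, ← Complex.sub_re]
    exact abs_re_le_norm' _
  refine h1.trans ?_
  rw [key]
  have h2 : ‖⟪G u, u - v⟫ + ⟪G (u - v), v⟫‖ ≤ ‖G u‖ * ‖u - v‖ + ‖G (u - v)‖ * ‖v‖ :=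
    (norm_add_le _ _).trans (add_le_add (norm_inner_le_norm _ _) (norm_inner_le_norm _ _))
  refine h2.trans ?_
  have h3 := G.le_opNorm u
  have h4 := G.le_opNorm (u - v)
  nlinarith [norm_nonneg (u - v), norm_nonneg u, norm_nonneg v, norm_nonneg G]

lemma liminf_nonpos_of_forall_lt {f : ℕ → ℝ} {C : ℝ} (hb : ∀ n, -C ≤ f n)
    (h : ∀ n, f n < 1 / (n + 1)) : atTop.liminf f ≤ 0 := by
  by_contra hpos
  push_neg at hpos
  have hbU : atTop.IsBoundedUnder (· ≥ ·) f :=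
    ⟨-C, Filter.eventually_map.2 (Filter.Eventually.of_forall fun n => hb n)⟩
  have hε : ∀ ε : ℝ, 0 < ε → atTop.liminf f ≤ ε := by
    intro ε hε
    refine Filter.liminf_le_of_frequently_le ?_ hbU
    have ht : Tendsto (fun n : ℕ => 1 / ((n : ℝ) + 1)) atTop (𝓝 0) :=
      tendsto_one_div_add_atTop_nhds_zero_nat
    have hev : ∀ᶠ n : ℕ in atTop, (1 : ℝ) / (n + 1) < ε := by
      have := ht.eventually (eventually_lt_nhds hε)
      simpa using this
    exact (hev.mono fun n hn => ((h n).trans hn).le).frequently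
  have h2 := hε (atTop.liminf f / 2) (half_pos hpos)
  linarith

lemma pos_liminf_iff {f : ℕ → ℝ} {C : ℝ} (hb : ∀ n, |f n| ≤ C) :
    0 < atTop.liminf f ↔ ∃ ε : ℝ, 0 < ε ∧ ∀ᶠ n in atTop, ε ≤ f n := by
  have hbU : atTop.IsBoundedUnder (· ≥ ·) f :=
    ⟨-C, Filter.eventually_map.2 (Filter.Eventually.of_forall fun n => neg_le_of_abs_le (hb n))⟩
  have hbO : atTop.IsBoundedUnder (· ≤ ·) f :=
    ⟨C, Filter.eventually_map.2 (Filter.Eventually.of_forall fun n => le_of_abs_le (hb n))⟩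
  constructor
  · intro h
    refine ⟨atTop.liminf f / 2, half_pos h, ?_⟩
    exact (Filter.eventually_lt_of_lt_liminf (half_lt_self h) hbU).mono fun n hn => hn.le
  · rintro ⟨ε, hε, hev⟩
    have h2 : ε ≤ atTop.liminf f := Filter.le_liminf_of_le hbO.isCoboundedUnder_flip hev
    linarith

lemma neg_limsup_iff {f : ℕ → ℝ} {C : ℝ} (hb : ∀ n, |f n| ≤ C) :
    atTop.limsup f < 0 ↔ ∃ ε : ℝ, 0 < ε ∧ ∀ᶠ n in atTop, f n ≤ -ε := by
  have hbU : atTop.IsBoundedUnder (· ≥ ·) f :=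
    ⟨-C, Filter.eventually_map.2 (Filter.Eventually.of_forall fun n => neg_le_of_abs_le (hb n))⟩
  have hbO : atTop.IsBoundedUnder (· ≤ ·) f :=
    ⟨C, Filter.eventually_map.2 (Filter.Eventually.of_forall fun n => le_of_abs_le (hb n))⟩
  constructor
  · intro h
    refine ⟨-(atTop.limsup f / 2), by linarith, ?_⟩
    have := Filter.eventually_lt_of_limsup_lt (show atTop.limsup f < atTop.limsup f / 2 by linarith) hbO
    exact this.mono fun n hn => by linarith
  · rintro ⟨ε, hε, hev⟩
    have h2 : atTop.limsup f ≤ -ε := Filter.limsup_le_of_le hbU.isCoboundedUnder_flip hev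
    linarith

lemma limsup_neg_iff_pos_liminf_neg {f : ℕ → ℝ} {C : ℝ} (hb : ∀ n, |f n| ≤ C) :
    atTop.limsup f < 0 ↔ 0 < atTop.liminf (fun n => - f n) := by
  rw [neg_limsup_iff hb, pos_liminf_iff (f := fun n => -f n) (C := C)
    (fun n => by simpa [abs_neg] using hb n)]
  constructor
  · rintro ⟨ε, hε, hev⟩; exact ⟨ε, hε, hev.mono fun n hn => by linarith⟩
  · rintro ⟨ε, hε, hev⟩; exact ⟨ε, hε, hev.mono fun n hn => by linarith⟩

end Statement10Aux

section Statement10Aux2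

local notation "⟪" x ", " y "⟫" => @inner ℂ _ _ x y

lemma pmap_apply_congr (T : H →ₗ.[ℂ] H) {a b : T.domain} (h : (a : H) = (b : H)) :
    T a = T b := by
  have : a = b := Subtype.ext h
  rw [this]

/-- The domain of the formal adjoint of `T`. -/
def dstar (T : H →ₗ.[ℂ] H) : Submodule ℂ H where
  carrier := {u | ∃ w : H, ∀ x : T.domain, ⟪T x, u⟫ = ⟪(x : H), w⟫}
  zero_mem' := ⟨0, fun x => by simp⟩
  add_mem' := by
    rintro a b ⟨wa, ha⟩ ⟨wb, hb⟩
    exact ⟨wa + wb, fun x => by rw [inner_add_right, ha x, hb x, inner_add_right]⟩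
  smul_mem' := by
    rintro c u ⟨w, hw⟩
    exact ⟨c • w, fun x => by rw [inner_smul_right, hw x, inner_smul_right]⟩

variable [CompleteSpace H]

lemma dstar_dense (T : H →ₗ.[ℂ] H) (hTc : T.IsClosed) :
    Dense ((dstar T : Submodule ℂ H) : Set H) := by
  classical
  set J : (H × H) ≃L[ℂ] (H × H) :=
    (ContinuousLinearEquiv.prodComm ℂ H H).trans
      ((ContinuousLinearEquiv.neg ℂ).prodCongr (ContinuousLinearEquiv.refl ℂ H)) with hJdef
  have hJapp : ∀ p : H × H, J p = (-p.2, p.1) := fun p => rfl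
  set e := WithLp.prodContinuousLinearEquiv 2 ℂ H H with hedef
  set ψ : (H × H) ≃L[ℂ] WithLp 2 (H × H) := J.trans e.symm with hψdef
  set W : Submodule ℂ (WithLp 2 (H × H)) :=
    T.graph.map (ψ.toLinearEquiv : (H × H) →ₗ[ℂ] WithLp 2 (H × H)) with hWdef
  have hWclosed : IsClosed (W : Set (WithLp 2 (H × H))) := by
    have : (W : Set (WithLp 2 (H × H))) = ψ '' (T.graph : Set (H × H)) := by
      rfl
    rw [this]
    exact (ψ.toHomeomorph.isClosedMap) _ hTc
  have hinner : ∀ a b u w : H, ⟪e.symm (a, b), e.symm (u, w)⟫ = ⟪a, u⟫ + ⟪b, w⟫ :=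
    fun a b u w => rfl
  have hmemperp : ∀ u w : H,
      e.symm (u, w) ∈ Wᗮ ↔ ∀ x : T.domain, ⟪T x, u⟫ = ⟪(x : H), w⟫ := by
    intro u w
    rw [Submodule.mem_orthogonal]
    constructor
    · intro h x
      have hx : ψ ((x : H), T x) ∈ W := ⟨_, T.mem_graph x, rfl⟩
      have := h _ hx
      have hps : ψ ((x : H), T x) = e.symm (-(T x), (x : H)) := rfl
      rw [hps, hinner] at this
      have : ⟪(x : H), w⟫ - ⟪T x, u⟫ = 0 := by
        rw [← this]; rw [inner_neg_left]; ring
      linear_combination -this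
    · intro h q hq
      obtain ⟨p, hp, rfl⟩ := hq
      obtain ⟨x, hx1, hx2⟩ := T.mem_graph_iff.mp hp
      have hps : (ψ.toLinearEquiv : (H × H) →ₗ[ℂ] WithLp 2 (H × H)) p
          = e.symm (-(T x), (x : H)) := by
        have : p = ((x : H), T x) := by
          obtain ⟨p1, p2⟩ := p
          simp only at hx1 hx2
          rw [← hx1, ← hx2]
        rw [this]; rfl
      rw [hps, hinner, inner_neg_left, h x]
      ring
  have horth : (dstar T : Submodule ℂ H)ᗮ = ⊥ := by
    rw [Submodule.eq_bot_iff]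
    intro v hv
    have hq : e.symm (v, 0) ∈ Wᗮᗮ := by
      rw [Submodule.mem_orthogonal]
      intro p hp
      have hpe : p = e.symm ((e p).1, (e p).2) := by simp
      have hu : (e p).1 ∈ dstar T := ⟨(e p).2, (hmemperp _ _).mp (by rw [← hpe]; exact hp)⟩
      rw [hpe, hinner]
      have hv1 : ⟪(e p).1, v⟫ = 0 := hv _ hu
      rw [hv1, inner_zero_right, add_zero]
    rw [Submodule.orthogonal_orthogonal_eq_closure] at hq
    have hWc : W.topologicalClosure = W :=
      le_antisymm (W.topologicalClosure_minimal le_rfl hWclosed) W.le_topologicalClosure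
    rw [hWc] at hq
    obtain ⟨p, hp, hpe⟩ := hq
    have hJp : J p = (v, 0) := by
      have := congrArg e hpe
      simpa [hψdef] using this
    rw [hJapp] at hJp
    have h1 : p.1 = 0 := congrArg Prod.snd hJp
    have h2 : -p.2 = v := congrArg Prod.fst hJp
    have hg : (p.1, p.2) ∈ T.graph := by simpa using hp
    have := T.graph_fst_eq_zero_snd hg h1
    rw [← h2, this, neg_zero]
  have hct : (dstar T).topologicalClosure = ⊤ := by
    rw [← Submodule.orthogonal_orthogonal_eq_closure, horth, Submodule.bot_orthogonal_eq_top]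
  exact Submodule.dense_iff_topologicalClosure_eq_top.mpr hct

lemma finCodim_top : FinCodim (⊤ : Submodule ℂ H) := by
  haveI : Subsingleton (H ⧸ (⊤ : Submodule ℂ H)) :=
    Submodule.Quotient.subsingleton_iff.mpr rfl
  exact Module.Finite.of_surjective (0 : (⊥ : Submodule ℂ H) →ₗ[ℂ] H ⧸ (⊤ : Submodule ℂ H))
    (fun y => ⟨0, Subsingleton.elim _ _⟩)

lemma finCodim_inf {M N : Submodule ℂ H} (hM : FinCodim M) (hN : FinCodim N) :
    FinCodim (M ⊓ N) := by
  haveI : Module.Finite ℂ (H ⧸ M) := hM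
  haveI : Module.Finite ℂ (H ⧸ N) := hN
  haveI : Module.Finite ℂ ((H ⧸ M) × (H ⧸ N)) := Module.Finite.prod
  have hle : M ⊓ N ≤ LinearMap.ker ((M.mkQ).prod (N.mkQ)) := by
    rw [LinearMap.ker_prod, Submodule.ker_mkQ, Submodule.ker_mkQ]
  have hinj : Function.Injective ((M ⊓ N).liftQ ((M.mkQ).prod (N.mkQ)) hle) := by
    rw [← LinearMap.ker_eq_bot]
    apply Submodule.ker_liftQ_eq_bot
    rw [LinearMap.ker_prod, Submodule.ker_mkQ, Submodule.ker_mkQ]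
  exact FiniteDimensional.of_injective _ hinj

lemma finCodim_span_orthogonal {s : Set H} (hs : s.Finite) :
    FinCodim ((Submodule.span ℂ s)ᗮ) := by
  set F := Submodule.span ℂ s with hF
  haveI : FiniteDimensional ℂ F := FiniteDimensional.span_of_finite ℂ hs
  set φ : F →ₗ[ℂ] H ⧸ (Fᗮ) := ((Fᗮ).mkQ).comp F.subtype with hφ
  refine Module.Finite.of_surjective φ ?_
  intro y
  obtain ⟨x, rfl⟩ := Submodule.mkQ_surjective _ y
  refine ⟨F.orthogonalProjection x, ?_⟩
  have hmem : (x - (F.orthogonalProjection x : H)) ∈ Fᗮ :=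
    Submodule.sub_starProjection_mem_orthogonal (K := F) x
  have : ((F.orthogonalProjection x : H) : H) - x ∈ Fᗮ := by
    simpa using (Fᗮ).neg_mem hmem
  exact (Submodule.Quotient.eq _).mpr this

end Statement10Aux2

section Statement10Aux3

local notation "⟪" x ", " y "⟫" => @inner ℂ _ _ x y

variable [CompleteSpace H] {A B : H →ₗ.[ℂ] H}

lemma tendsto_inner_zero_of_dense {v : ℕ → H} {C : ℝ} (hC : ∀ n, ‖v n‖ ≤ C)
    {D : Submodule ℂ H} (hD : Dense (D : Set H))
    (h : ∀ u ∈ D, Tendsto (fun n => ⟪u, v n⟫) atTop (𝓝 (0 : ℂ))) (u : H) :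
    Tendsto (fun n => ⟪u, v n⟫) atTop (𝓝 (0 : ℂ)) := by
  rw [Metric.tendsto_atTop]
  intro ε hε
  have hC0 : 0 ≤ C := le_trans (norm_nonneg _) (hC 0)
  obtain ⟨d, hdD, hdu⟩ : ∃ d ∈ D, ‖u - d‖ < ε / (2 * (C + 1)) := by
    obtain ⟨d, hd1, hd2⟩ := Metric.mem_closure_iff.mp (hD u) _
      (by positivity : (0:ℝ) < ε / (2 * (C + 1)))
    exact ⟨d, hd1, by rwa [dist_eq_norm] at hd2⟩
  have hd := h d hdD
  rw [Metric.tendsto_atTop] at hd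
  obtain ⟨N, hN⟩ := hd (ε / 2) (by positivity)
  refine ⟨N, fun n hn => ?_⟩
  rw [dist_zero_right]
  have hsplit : ⟪u, v n⟫ = ⟪u - d, v n⟫ + ⟪d, v n⟫ := by
    rw [inner_sub_left]; ring
  have hfirst : ‖⟪u - d, v n⟫‖ ≤ ε / 2 := by
    refine (norm_inner_le_norm _ _).trans ?_
    have h1 : ‖u - d‖ * ‖v n‖ ≤ (ε / (2 * (C + 1))) * (C + 1) :=
      mul_le_mul hdu.le ((hC n).trans (by linarith)) (norm_nonneg _) (by positivity)
    refine h1.trans (le_of_eq ?_)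
    field_simp
  have hsecond : ‖⟪d, v n⟫‖ < ε / 2 := by
    have := hN n hn
    rwa [dist_zero_right] at this
  calc ‖⟪u, v n⟫‖ ≤ ‖⟪u - d, v n⟫‖ + ‖⟪d, v n⟫‖ := by
        rw [hsplit]; exact norm_add_le _ _
    _ < ε / 2 + ε / 2 := add_lt_add_of_le_of_lt hfirst hsecond
    _ = ε := add_halves ε

lemma graph_bound (hAc : A.IsClosed)
    (hdom : ∀ u : H, u ∈ B.domain ↔ u ∈ A.domain)
    (hcomp : IsACompact A (fun x => B ⟨(x : H), (hdom (x : H)).mpr x.2⟩ - A x))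
    (x : ℕ → A.domain) {c1 c2 : ℝ}
    (h1 : ∀ n, ‖(x n : H)‖ ≤ c1)
    (h2 : ∀ n, ‖B ⟨(x n : H), (hdom (x n : H)).mpr (x n).2⟩‖ ≤ c2) :
    ∃ C : ℝ, ∀ n, ‖(x n : H)‖ + ‖A (x n)‖ ≤ C := by
  by_contra hCb
  push_neg at hCb
  have hg : ∀ k : ℕ, ∃ n, (k : ℝ) + 1 < ‖(x n : H)‖ + ‖A (x n)‖ := fun k => hCb ((k : ℝ) + 1)
  set g : ℕ → ℕ := fun k => (hg k).choose with hgdef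
  have hgt : ∀ k : ℕ, (k : ℝ) + 1 < ‖(x (g k) : H)‖ + ‖A (x (g k))‖ := fun k => (hg k).choose_spec
  set t : ℕ → ℝ := fun k => ‖(x (g k) : H)‖ + ‖A (x (g k))‖ with htdef
  have htpos : ∀ k, 0 < t k := fun k => lt_of_le_of_lt (by positivity) (hgt k)
  have htinv : ∀ k, (t k)⁻¹ ≤ ((k : ℝ) + 1)⁻¹ := by
    intro k
    have h0 : (0:ℝ) < (k : ℝ) + 1 := by positivity
    rw [inv_le_inv₀ (htpos k) h0]
    exact (hgt k).le
  set y : ℕ → A.domain := fun k => (((t k)⁻¹ : ℝ) : ℂ) • x (g k) with hydef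
  have hycoe : ∀ k, ((y k : H)) = (((t k)⁻¹ : ℝ) : ℂ) • (x (g k) : H) := fun k => rfl
  have hyA : ∀ k, A (y k) = (((t k)⁻¹ : ℝ) : ℂ) • A (x (g k)) := fun k => A.map_smul _ _
  have hnorm_smul : ∀ (k : ℕ) (v : H), ‖(((t k)⁻¹ : ℝ) : ℂ) • v‖ = (t k)⁻¹ * ‖v‖ := by
    intro k v
    rw [norm_smul, Complex.norm_real, Real.norm_eq_abs, abs_of_pos (inv_pos.mpr (htpos k))]
  have hsum : ∀ k, ‖(y k : H)‖ + ‖A (y k)‖ = 1 := by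
    intro k
    rw [hycoe, hyA, hnorm_smul, hnorm_smul, ← mul_add, inv_mul_cancel₀ (ne_of_gt (htpos k))]
  obtain ⟨φ, hφ, w, hw⟩ := hcomp y ⟨1, fun k => (hsum k).le⟩
  have haux : Tendsto (fun k : ℕ => ((k : ℝ) + 1)⁻¹) atTop (𝓝 0) := by
    have := tendsto_one_div_add_atTop_nhds_zero_nat (𝕜 := ℝ)
    simpa [one_div] using this
  have hy0 : Tendsto (fun k => (y k : H)) atTop (𝓝 0) := by
    have hb : ∀ k, ‖(y k : H)‖ ≤ c1 * ((k : ℝ) + 1)⁻¹ := by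
      intro k
      rw [hycoe, hnorm_smul]
      calc (t k)⁻¹ * ‖(x (g k) : H)‖ ≤ ((k : ℝ) + 1)⁻¹ * c1 :=
            mul_le_mul (htinv k) (h1 _) (norm_nonneg _) (by positivity)
        _ = c1 * ((k : ℝ) + 1)⁻¹ := mul_comm _ _
    exact squeeze_zero_norm hb (by simpa using haux.const_mul c1)
  have hBy : ∀ k, B ⟨(y k : H), (hdom _).mpr (y k).2⟩
      = (((t k)⁻¹ : ℝ) : ℂ) • B ⟨(x (g k) : H), (hdom _).mpr (x (g k)).2⟩ := by
    intro k
    have heq : (⟨(y k : H), (hdom _).mpr (y k).2⟩ : B.domain)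
        = (((t k)⁻¹ : ℝ) : ℂ) • (⟨(x (g k) : H), (hdom _).mpr (x (g k)).2⟩ : B.domain) :=
      Subtype.ext rfl
    rw [heq, B.map_smul]
  have hBy0 : Tendsto (fun k => B ⟨(y k : H), (hdom _).mpr (y k).2⟩) atTop (𝓝 0) := by
    have hb : ∀ k, ‖B ⟨(y k : H), (hdom _).mpr (y k).2⟩‖ ≤ c2 * ((k : ℝ) + 1)⁻¹ := by
      intro k
      rw [hBy, hnorm_smul]
      calc (t k)⁻¹ * ‖B ⟨(x (g k) : H), (hdom _).mpr (x (g k)).2⟩‖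
          ≤ ((k : ℝ) + 1)⁻¹ * c2 :=
            mul_le_mul (htinv k) (h2 _) (norm_nonneg _) (by positivity)
        _ = c2 * ((k : ℝ) + 1)⁻¹ := mul_comm _ _
    exact squeeze_zero_norm hb (by simpa using haux.const_mul c2)
  have hA : Tendsto (fun k => A (y (φ k))) atTop (𝓝 (-w)) := by
    have heq : ∀ k, A (y (φ k)) = B ⟨(y (φ k) : H), (hdom _).mpr (y (φ k)).2⟩
        - (B ⟨(y (φ k) : H), (hdom _).mpr (y (φ k)).2⟩ - A (y (φ k))) := by
      intro k
      abel
    rw [show (fun k => A (y (φ k))) = fun k =>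
      B ⟨(y (φ k) : H), (hdom _).mpr (y (φ k)).2⟩
        - (B ⟨(y (φ k) : H), (hdom _).mpr (y (φ k)).2⟩ - A (y (φ k))) from funext heq]
    have := (hBy0.comp hφ.tendsto_atTop).sub hw
    simpa using this
  have hpair : Tendsto (fun k => ((y (φ k) : H), A (y (φ k)))) atTop (𝓝 (0, -w)) :=
    (hy0.comp hφ.tendsto_atTop).prodMk_nhds hA
  have hAcset : IsClosed (A.graph : Set (H × H)) := hAc
  have hmem : ((0 : H), -w) ∈ A.graph :=
    hAcset.mem_of_tendsto hpair (Filter.Eventually.of_forall fun k => A.mem_graph _)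
  have hw0 : -w = 0 := A.graph_fst_eq_zero_snd hmem rfl
  have hA0 : Tendsto (fun k => ‖A (y (φ k))‖) atTop (𝓝 0) := by
    rw [hw0] at hA
    simpa using hA.norm
  have hyn0 : Tendsto (fun k => ‖(y (φ k) : H)‖) atTop (𝓝 0) :=
    by simpa using (hy0.comp hφ.tendsto_atTop).norm
  have hone : Tendsto (fun _ : ℕ => (1 : ℝ)) atTop (𝓝 0) := by
    have := hyn0.add hA0
    simp only [add_zero] at this
    convert this using 1
    funext k
    rw [hsum (φ k)]
  have : (1 : ℝ) = 0 := tendsto_nhds_unique tendsto_const_nhds hone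
  exact one_ne_zero this

lemma key_subseq (hAc : A.IsClosed) (hBc : B.IsClosed)
    (hdom : ∀ u : H, u ∈ B.domain ↔ u ∈ A.domain)
    (hcomp : IsACompact A (fun x => B ⟨(x : H), (hdom (x : H)).mpr x.2⟩ - A x))
    (x : ℕ → A.domain) {c2 : ℝ}
    (hwk : ∀ u : H, Tendsto (fun n => ⟪u, (x n : H)⟫) atTop (𝓝 (0 : ℂ)))
    (h1 : ∀ n, ‖(x n : H)‖ ≤ 1)
    (h2 : ∀ n, ‖B ⟨(x n : H), (hdom (x n : H)).mpr (x n).2⟩‖ ≤ c2) :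
    ∃ φ : ℕ → ℕ, StrictMono φ ∧
      Tendsto (fun n => B ⟨(x (φ n) : H), (hdom (x (φ n) : H)).mpr (x (φ n)).2⟩ - A (x (φ n)))
        atTop (𝓝 0) := by
  obtain ⟨C, hC⟩ := graph_bound hAc hdom hcomp x h1 h2
  obtain ⟨φ, hφ, w, hwlim⟩ := hcomp x ⟨C, hC⟩
  have hboundA : ∀ n, ‖A (x n)‖ ≤ C := fun n =>
    le_trans (le_add_of_nonneg_left (norm_nonneg _)) (hC n)
  have hAweak : ∀ u : H, Tendsto (fun n => ⟪u, A (x n)⟫) atTop (𝓝 (0:ℂ)) := by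
    refine tendsto_inner_zero_of_dense hboundA (dstar_dense A hAc) ?_
    rintro d ⟨wd, hwd⟩
    have heq : ∀ n, ⟪d, A (x n)⟫ = ⟪wd, (x n : H)⟫ := by
      intro n
      rw [← inner_conj_symm, hwd (x n), inner_conj_symm]
    rw [show (fun n => ⟪d, A (x n)⟫) = fun n => ⟪wd, (x n : H)⟫ from funext heq]
    exact hwk wd
  have hBweak : ∀ u : H,
      Tendsto (fun n => ⟪u, B ⟨(x n : H), (hdom (x n : H)).mpr (x n).2⟩⟫) atTop (𝓝 (0:ℂ)) := by
    refine tendsto_inner_zero_of_dense h2 (dstar_dense B hBc) ?_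
    rintro d ⟨wd, hwd⟩
    have heq : ∀ n, ⟪d, B ⟨(x n : H), (hdom (x n : H)).mpr (x n).2⟩⟫ = ⟪wd, (x n : H)⟫ := by
      intro n
      rw [← inner_conj_symm, hwd ⟨(x n : H), (hdom (x n : H)).mpr (x n).2⟩, inner_conj_symm]
    rw [show (fun n => ⟪d, B ⟨(x n : H), (hdom (x n : H)).mpr (x n).2⟩⟫)
      = fun n => ⟪wd, (x n : H)⟫ from funext heq]
    exact hwk wd
  have hdiffweak : Tendsto
      (fun n => ⟪w, B ⟨(x n : H), (hdom (x n : H)).mpr (x n).2⟩ - A (x n)⟫) atTop (𝓝 (0:ℂ)) := by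
    have h2 := (hBweak w).sub (hAweak w)
    simp only [sub_zero] at h2
    have heq : (fun n => ⟪w, B ⟨(x n : H), (hdom (x n : H)).mpr (x n).2⟩ - A (x n)⟫)
        = fun n => ⟪w, B ⟨(x n : H), (hdom (x n : H)).mpr (x n).2⟩⟫ - ⟪w, A (x n)⟫ := by
      funext n
      rw [inner_sub_right]
    rw [heq]
    exact h2
  have hdiffweakφ : Tendsto
      (fun n => ⟪w, B ⟨(x (φ n) : H), (hdom (x (φ n) : H)).mpr (x (φ n)).2⟩ - A (x (φ n))⟫)
      atTop (𝓝 (0:ℂ)) := hdiffweak.comp hφ.tendsto_atTop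
  have hdiffweak2 : Tendsto
      (fun n => ⟪w, B ⟨(x (φ n) : H), (hdom (x (φ n) : H)).mpr (x (φ n)).2⟩ - A (x (φ n))⟫)
      atTop (𝓝 ⟪w, w⟫) := Filter.Tendsto.inner tendsto_const_nhds hwlim
  have hww : ⟪w, w⟫ = (0 : ℂ) := tendsto_nhds_unique hdiffweak2 hdiffweakφ
  have hw0 : w = 0 := inner_self_eq_zero.mp hww
  exact ⟨φ, hφ, by rwa [hw0] at hwlim⟩

lemma comp_swap (hAc : A.IsClosed)
    (hdom : ∀ u : H, u ∈ B.domain ↔ u ∈ A.domain)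
    (hcomp : IsACompact A (fun x => B ⟨(x : H), (hdom (x : H)).mpr x.2⟩ - A x)) :
    IsACompact B (fun x => A ⟨(x : H), (hdom (x : H)).mp x.2⟩ - B x) := by
  rintro x ⟨C, hC⟩
  set xa : ℕ → A.domain := fun n => ⟨(x n : H), (hdom _).mp (x n).2⟩ with hxadef
  have h1 : ∀ n, ‖(xa n : H)‖ ≤ C := fun n =>
    le_trans (le_add_of_nonneg_right (norm_nonneg _)) (hC n)
  have hBeq : ∀ n, B ⟨(xa n : H), (hdom _).mpr (xa n).2⟩ = B (x n) := fun n =>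
    pmap_apply_congr B rfl
  have h2 : ∀ n, ‖B ⟨(xa n : H), (hdom _).mpr (xa n).2⟩‖ ≤ C := by
    intro n
    rw [hBeq n]
    exact le_trans (le_add_of_nonneg_left (norm_nonneg _)) (hC n)
  obtain ⟨C', hC'⟩ := graph_bound hAc hdom hcomp xa h1 h2
  obtain ⟨φ, hφ, w, hwlim⟩ := hcomp xa ⟨C', hC'⟩
  refine ⟨φ, hφ, -w, ?_⟩
  have heq : ∀ n, A ⟨(x (φ n) : H), (hdom (x (φ n) : H)).mp (x (φ n)).2⟩ - B (x (φ n))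
      = -(B ⟨(xa (φ n) : H), (hdom _).mpr (xa (φ n)).2⟩ - A (xa (φ n))) := by
    intro n
    rw [hBeq, neg_sub]
  rw [show (fun n => A ⟨(x (φ n) : H), (hdom (x (φ n) : H)).mp (x (φ n)).2⟩ - B (x (φ n)))
    = fun n => -(B ⟨(xa (φ n) : H), (hdom _).mpr (xa (φ n)).2⟩ - A (xa (φ n))) from funext heq]
  exact hwlim.neg

lemma isBoundedOp_of_isBoundedOp (hAc : A.IsClosed)
    (hdom : ∀ u : H, u ∈ B.domain ↔ u ∈ A.domain)
    (hcomp : IsACompact A (fun x => B ⟨(x : H), (hdom (x : H)).mpr x.2⟩ - A x))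
    (hA : IsBoundedOp A) : IsBoundedOp B := by
  obtain ⟨C, hCb⟩ := hA
  by_contra hB
  rw [IsBoundedOp] at hB
  push_neg at hB
  have hsel : ∀ n : ℕ, ∃ u : B.domain, ‖(u : H)‖ ≤ 1 ∧ (n : ℝ) < ‖B u‖ := by
    intro n
    obtain ⟨z, hz⟩ := hB n
    have hzne : (z : H) ≠ 0 := by
      intro h0
      have : z = 0 := Subtype.ext h0
      rw [this] at hz
      simp at hz
    have hznorm : (0:ℝ) < ‖(z : H)‖ := norm_pos_iff.mpr hzne
    refine ⟨((‖(z : H)‖⁻¹ : ℝ) : ℂ) • z, ?_, ?_⟩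
    · rw [Submodule.coe_smul, norm_smul, Complex.norm_real, Real.norm_eq_abs,
        abs_of_pos (inv_pos.mpr hznorm), inv_mul_cancel₀ (ne_of_gt hznorm)]
    · rw [B.map_smul, norm_smul, Complex.norm_real, Real.norm_eq_abs,
        abs_of_pos (inv_pos.mpr hznorm)]
      rw [lt_inv_mul_iff₀ hznorm]
      linarith [hz]
  choose u hu1 hu2 using hsel
  set ua : ℕ → A.domain := fun n => ⟨(u n : H), (hdom _).mp (u n).2⟩ with huadef
  set C' := max C 0 with hC'def
  have hAbound : ∀ n, ‖A (ua n)‖ ≤ C' := by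
    intro n
    refine (hCb (ua n)).trans ?_
    calc C * ‖(ua n : H)‖ ≤ C' * ‖(ua n : H)‖ :=
          mul_le_mul_of_nonneg_right (le_max_left _ _) (norm_nonneg _)
      _ ≤ C' * 1 := mul_le_mul_of_nonneg_left (hu1 n) (le_max_right _ _)
      _ = C' := mul_one _
  obtain ⟨φ, hφ, w, hwlim⟩ := hcomp ua ⟨1 + C', fun n => add_le_add (hu1 n) (hAbound n)⟩
  have hev1 : ∀ᶠ n in atTop,
      ‖B ⟨(ua (φ n) : H), (hdom _).mpr (ua (φ n)).2⟩ - A (ua (φ n))‖ ≤ ‖w‖ + 1 :=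
    hwlim.norm.eventually (eventually_le_nhds (lt_add_one ‖w‖))
  have hev2 : ∀ᶠ n : ℕ in atTop, C' + (‖w‖ + 1) < (n : ℝ) :=
    tendsto_natCast_atTop_atTop.eventually (eventually_gt_atTop (C' + (‖w‖ + 1)))
  obtain ⟨n, hn1, hn2⟩ := (hev1.and hev2).exists
  have hBueq : B ⟨(ua (φ n) : H), (hdom _).mpr (ua (φ n)).2⟩ = B (u (φ n)) :=
    pmap_apply_congr B rfl
  have htri : ‖B (u (φ n))‖ ≤ ‖B (u (φ n)) - A (ua (φ n))‖ + ‖A (ua (φ n))‖ := by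
    have := norm_add_le (B (u (φ n)) - A (ua (φ n))) (A (ua (φ n)))
    simpa using this
  rw [hBueq] at hn1
  have hcast : (n : ℝ) ≤ (φ n : ℝ) := Nat.cast_le.mpr hφ.le_apply
  have := hu2 (φ n)
  linarith [hAbound (φ n)]

lemma isBoundedOp_of_isBoundedOp' (hAc : A.IsClosed)
    (hdom : ∀ u : H, u ∈ B.domain ↔ u ∈ A.domain)
    (hcomp : IsACompact A (fun x => B ⟨(x : H), (hdom (x : H)).mpr x.2⟩ - A x))
    (hB : IsBoundedOp B) : IsBoundedOp A := by
  obtain ⟨C, hCb⟩ := hB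
  by_contra hA
  rw [IsBoundedOp] at hA
  push_neg at hA
  have hsel : ∀ n : ℕ, ∃ u : A.domain, ‖(u : H)‖ ≤ 1 ∧ (n : ℝ) < ‖A u‖ := by
    intro n
    obtain ⟨z, hz⟩ := hA n
    have hzne : (z : H) ≠ 0 := by
      intro h0
      have : z = 0 := Subtype.ext h0
      rw [this] at hz
      simp at hz
    have hznorm : (0:ℝ) < ‖(z : H)‖ := norm_pos_iff.mpr hzne
    refine ⟨((‖(z : H)‖⁻¹ : ℝ) : ℂ) • z, ?_, ?_⟩
    · rw [Submodule.coe_smul, norm_smul, Complex.norm_real, Real.norm_eq_abs,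
        abs_of_pos (inv_pos.mpr hznorm), inv_mul_cancel₀ (ne_of_gt hznorm)]
    · rw [A.map_smul, norm_smul, Complex.norm_real, Real.norm_eq_abs,
        abs_of_pos (inv_pos.mpr hznorm)]
      rw [lt_inv_mul_iff₀ hznorm]
      linarith [hz]
  choose u hu1 hu2 using hsel
  set C' := max C 0 with hC'def
  have hBbound : ∀ n, ‖B ⟨(u n : H), (hdom _).mpr (u n).2⟩‖ ≤ C' := by
    intro n
    refine (hCb _).trans ?_
    calc C * ‖(u n : H)‖ ≤ C' * ‖(u n : H)‖ :=
          mul_le_mul_of_nonneg_right (le_max_left _ _) (norm_nonneg _)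
      _ ≤ C' * 1 := mul_le_mul_of_nonneg_left (hu1 n) (le_max_right _ _)
      _ = C' := mul_one _
  obtain ⟨C'', hC''⟩ := graph_bound hAc hdom hcomp u hu1 hBbound
  obtain ⟨n, hn⟩ := exists_nat_gt C''
  have := hu2 n
  have h2 := hC'' n
  have : ‖A (u n)‖ ≤ C'' := le_trans (le_add_of_nonneg_left (norm_nonneg _)) h2
  linarith [hu2 n]

end Statement10Aux3

section Statement10Aux4

local notation "⟪" x ", " y "⟫" => @inner ℂ _ _ x y

variable [CompleteSpace H] {A B : H →ₗ.[ℂ] H}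

lemma transfer_plus (G : H →L[ℂ] H) (hAc : A.IsClosed) (hBc : B.IsClosed)
    (hdom : ∀ u : H, u ∈ B.domain ↔ u ∈ A.domain)
    (hcomp : IsACompact A (fun x => B ⟨(x : H), (hdom (x : H)).mpr x.2⟩ - A x))
    (l : ℂ) (hA : ∃ M, FinCodim M ∧ PiPlusCond G A l M) :
    ∃ M, FinCodim M ∧ PiPlusCond G B l M := by
  obtain ⟨M, hMfc, hMp⟩ := hA
  by_contra hB
  push_neg at hB
  have haux : Tendsto (fun k : ℕ => 1 / ((k : ℝ) + 1)) atTop (𝓝 0) :=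
    tendsto_one_div_add_atTop_nhds_zero_nat
  have step : ∀ (L : List H) (n : ℕ), ∃ v : B.domain,
      (v : H) ∈ M ∧ (∀ u ∈ L, ⟪u, (v : H)⟫ = (0:ℂ)) ∧ ‖(v : H)‖ = 1 ∧
      ‖B v - l • ((v : H))‖ < 1 / (n + 1) ∧ brkRe G (v : H) (v : H) < 1 / (n + 1) := by
    intro L n
    set M' : Submodule ℂ H := M ⊓ (Submodule.span ℂ {u | u ∈ L})ᗮ with hM'
    have hM'fc : FinCodim M' := finCodim_inf hMfc (finCodim_span_orthogonal L.finite_toSet)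
    have hnc := hB M' hM'fc
    rw [PiPlusCond] at hnc
    push_neg at hnc
    obtain ⟨y, hyM', hyapp, hylim⟩ := hnc
    have hbound : ∀ j, |brkRe G ((y j : H)) ((y j : H))| ≤ ‖G‖ := by
      intro j
      have h0 := abs_brkRe_le G ((y j : H))
      rw [hyapp.1 j] at h0
      simpa using h0
    have hfreq : ∃ᶠ j in atTop, brkRe G ((y j : H)) ((y j : H)) < 1 / (n + 1) := by
      refine Filter.frequently_lt_of_liminf_lt ?_ ?_
      · refine Filter.IsBoundedUnder.isCoboundedUnder_flip
          ⟨‖G‖, Filter.eventually_map.2 (Filter.Eventually.of_forall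
            (fun j => le_of_abs_le (hbound j)))⟩
      · exact lt_of_le_of_lt hylim (by positivity)
    have hev : ∀ᶠ j in atTop, ‖B (y j) - l • ((y j : H))‖ < 1 / (n + 1) := by
      have h2 := hyapp.2.norm
      rw [norm_zero] at h2
      exact h2.eventually (eventually_lt_nhds (by positivity))
    obtain ⟨j, hj1, hj2⟩ := (hfreq.and_eventually hev).exists
    refine ⟨y j, (Submodule.mem_inf.mp (hyM' j)).1, ?_, hyapp.1 j, hj2, hj1⟩
    intro u hu
    have h3 := (Submodule.mem_inf.mp (hyM' j)).2
    exact (Submodule.mem_orthogonal _ _).mp h3 u (Submodule.subset_span hu)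
  set pick : ℕ → List H → B.domain := fun n L => (step L n).choose with hpickdef
  set chain : ℕ → List H :=
    fun n => Nat.rec (motive := fun _ => List H) []
      (fun m L => L ++ [((pick m L : B.domain) : H)]) n with hchaindef
  set xs : ℕ → B.domain := fun n => pick n (chain n) with hxsdef
  have hchain_succ : ∀ n, chain (n + 1) = chain n ++ [(xs n : H)] := fun n => rfl
  have hspec : ∀ n, (xs n : H) ∈ M ∧ (∀ u ∈ chain n, ⟪u, (xs n : H)⟫ = (0:ℂ)) ∧
      ‖(xs n : H)‖ = 1 ∧ ‖B (xs n) - l • ((xs n : H))‖ < 1 / (n + 1) ∧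
      brkRe G (xs n : H) (xs n : H) < 1 / (n + 1) := fun n => (step (chain n) n).choose_spec
  have hmem_chain : ∀ n u, u ∈ chain n ↔ ∃ m, m < n ∧ u = (xs m : H) := by
    intro n
    induction n with
    | zero => intro u; simp [hchaindef]
    | succ m ih =>
      intro u
      rw [hchain_succ m, List.mem_append, List.mem_singleton, ih]
      constructor
      · rintro (⟨k, hk, rfl⟩ | rfl)
        · exact ⟨k, hk.trans (Nat.lt_succ_self m), rfl⟩
        · exact ⟨m, Nat.lt_succ_self m, rfl⟩
      · rintro ⟨k, hk, rfl⟩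
        rcases Nat.lt_succ_iff_lt_or_eq.mp hk with h | h
        · exact Or.inl ⟨k, h, rfl⟩
        · subst h; exact Or.inr rfl
  have horth : ∀ m n, m < n → ⟪(xs m : H), (xs n : H)⟫ = (0:ℂ) := by
    intro m n hmn
    exact (hspec n).2.1 _ ((hmem_chain n _).mpr ⟨m, hmn, rfl⟩)
  have honb : Orthonormal ℂ (fun n => (xs n : H)) := by
    constructor
    · intro n; exact (hspec n).2.2.1
    · intro m n hmn
      rcases lt_or_gt_of_ne hmn with h | h
      · exact horth m n h
      · rw [← inner_conj_symm, horth n m h, map_zero]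
  have hwk : ∀ u : H, Tendsto (fun n => ⟪u, (xs n : H)⟫) atTop (𝓝 (0:ℂ)) := by
    intro u
    have hsum := honb.inner_products_summable (x := u)
    have hsq := hsum.tendsto_atTop_zero
    have hn : Tendsto (fun n => ‖⟪(xs n : H), u⟫‖) atTop (𝓝 0) := by
      have hs := (Real.continuous_sqrt.tendsto 0).comp hsq
      simp only [Function.comp_def] at hs
      rw [Real.sqrt_zero] at hs
      have heq2 : (fun n => Real.sqrt (‖⟪(xs n : H), u⟫‖ ^ 2))
          = fun n => ‖⟪(xs n : H), u⟫‖ :=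
        funext fun n => Real.sqrt_sq (norm_nonneg _)
      rwa [heq2] at hs
    rw [tendsto_zero_iff_norm_tendsto_zero]
    have heq : (fun n => ‖⟪u, (xs n : H)⟫‖) = fun n => ‖⟪(xs n : H), u⟫‖ :=
      funext fun n => norm_inner_symm _ _
    rwa [heq]
  set xa : ℕ → A.domain := fun n => ⟨(xs n : H), (hdom _).mp (xs n).2⟩ with hxadef
  have h1 : ∀ n, ‖(xa n : H)‖ ≤ 1 := fun n => ((hspec n).2.2.1).le
  have hBeq : ∀ n, B ⟨(xa n : H), (hdom _).mpr (xa n).2⟩ = B (xs n) := fun n =>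
    pmap_apply_congr B rfl
  have h2 : ∀ n, ‖B ⟨(xa n : H), (hdom _).mpr (xa n).2⟩‖ ≤ 1 + ‖l‖ := by
    intro n
    rw [hBeq]
    have htri : ‖B (xs n)‖ ≤ ‖B (xs n) - l • ((xs n : H))‖ + ‖l • ((xs n : H))‖ := by
      have h0 := norm_add_le (B (xs n) - l • ((xs n : H))) (l • ((xs n : H)))
      simpa using h0
    have h4 : ‖l • ((xs n : H))‖ = ‖l‖ := by rw [norm_smul, (hspec n).2.2.1, mul_one]
    have h5 : (1:ℝ) / (n+1) ≤ 1 := by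
      rw [div_le_one (by positivity)]
      linarith [Nat.cast_nonneg (α := ℝ) n]
    linarith [(hspec n).2.2.2.1]
  obtain ⟨φ, hφ, hdiff⟩ := key_subseq hAc hBc hdom hcomp xa hwk h1 h2
  have hcastle : ∀ n : ℕ, ((n:ℝ) + 1) ≤ ((φ n : ℝ) + 1) := by
    intro n
    have h0 : n ≤ φ n := hφ.le_apply
    exact_mod_cast add_le_add_left (Nat.cast_le.mpr h0) 1
  have happrox : IsApproxSeq A l (fun n => xa (φ n)) := by
    constructor
    · intro n; exact (hspec (φ n)).2.2.1
    · have heq : ∀ n, A (xa (φ n)) - l • ((xa (φ n) : H))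
          = (B (xs (φ n)) - l • ((xs (φ n) : H)))
            - (B ⟨(xa (φ n) : H), (hdom _).mpr (xa (φ n)).2⟩ - A (xa (φ n))) := by
        intro n
        rw [hBeq]
        abel
      rw [show (fun n => A (xa (φ n)) - l • ((xa (φ n) : H))) = _ from funext heq]
      have hBl : Tendsto (fun n => B (xs (φ n)) - l • ((xs (φ n) : H))) atTop (𝓝 0) := by
        have hb : ∀ n, ‖B (xs (φ n)) - l • ((xs (φ n) : H))‖ ≤ 1 / ((n:ℝ)+1) := by
          intro n
          refine le_trans ((hspec (φ n)).2.2.2.1).le ?_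
          exact one_div_le_one_div_of_le (by positivity) (hcastle n)
        exact squeeze_zero_norm hb haux
      have := hBl.sub hdiff
      simpa using this
  have hpos := hMp (fun n => xa (φ n)) (fun n => (hspec (φ n)).1) happrox
  have hle : atTop.liminf (fun n => brkRe G ((xa (φ n) : H)) ((xa (φ n) : H))) ≤ 0 := by
    refine liminf_nonpos_of_forall_lt (C := ‖G‖) ?_ ?_
    · intro n
      have h0 := abs_brkRe_le G ((xs (φ n) : H))
      rw [(hspec (φ n)).2.2.1] at h0
      simp only [mul_one] at h0
      exact neg_le_of_abs_le h0
    · intro n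
      refine lt_of_lt_of_le ((hspec (φ n)).2.2.2.2) ?_
      exact one_div_le_one_div_of_le (by positivity) (hcastle n)
  linarith

lemma transfer_infty_plus (G : H →L[ℂ] H) (hAc : A.IsClosed) (hBc : B.IsClosed)
    (hdom : ∀ u : H, u ∈ B.domain ↔ u ∈ A.domain)
    (hcomp : IsACompact A (fun x => B ⟨(x : H), (hdom (x : H)).mpr x.2⟩ - A x))
    (M : Submodule ℂ H) (hA : InftyPiPlusCond G A M) : InftyPiPlusCond G B M := by
  by_contra hB
  rw [InftyPiPlusCond] at hB
  push_neg at hB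
  obtain ⟨y, hyM, hyapp, hylim⟩ := hB
  have haux : Tendsto (fun k : ℕ => 1 / ((k : ℝ) + 1)) atTop (𝓝 0) :=
    tendsto_one_div_add_atTop_nhds_zero_nat
  have hbound : ∀ j, |brkRe G (B (y j)) (B (y j))| ≤ ‖G‖ := by
    intro j
    have h0 := abs_brkRe_le G (B (y j))
    rw [hyapp.1 j] at h0
    simpa using h0
  have hsel : ∀ n : ℕ, ∃ j, ‖(y j : H)‖ < 1 / (n + 1) ∧
      brkRe G (B (y j)) (B (y j)) < 1 / (n + 1) := by
    intro n
    have hfreq : ∃ᶠ j in atTop, brkRe G (B (y j)) (B (y j)) < 1 / (n + 1) := by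
      refine Filter.frequently_lt_of_liminf_lt ?_ ?_
      · exact Filter.IsBoundedUnder.isCoboundedUnder_flip
          ⟨‖G‖, Filter.eventually_map.2 (Filter.Eventually.of_forall
            (fun j => le_of_abs_le (hbound j)))⟩
      · exact lt_of_le_of_lt hylim (by positivity)
    have hev : ∀ᶠ j in atTop, ‖(y j : H)‖ < 1 / (n + 1) := by
      have h2 := hyapp.2.norm
      rw [norm_zero] at h2
      exact h2.eventually (eventually_lt_nhds (by positivity))
    obtain ⟨j, hj1, hj2⟩ := (hfreq.and_eventually hev).exists
    exact ⟨j, hj2, hj1⟩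
  choose j hj1 hj2 using hsel
  set z : ℕ → B.domain := fun n => y (j n) with hzdef
  set za : ℕ → A.domain := fun n => ⟨(z n : H), (hdom _).mp (z n).2⟩ with hzadef
  have hBeq : ∀ n, B ⟨(za n : H), (hdom _).mpr (za n).2⟩ = B (z n) := fun n =>
    pmap_apply_congr B rfl
  have h1 : ∀ n, ‖(za n : H)‖ ≤ 1 := by
    intro n
    refine (hj1 n).le.trans ?_
    rw [div_le_one (by positivity)]
    linarith [Nat.cast_nonneg (α := ℝ) n]
  have h2 : ∀ n, ‖B ⟨(za n : H), (hdom _).mpr (za n).2⟩‖ ≤ 1 := by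
    intro n
    rw [hBeq]
    exact (hyapp.1 (j n)).le
  have hwk : ∀ u : H, Tendsto (fun n => ⟪u, (za n : H)⟫) atTop (𝓝 (0:ℂ)) := by
    intro u
    rw [tendsto_zero_iff_norm_tendsto_zero]
    refine squeeze_zero (fun n => norm_nonneg _) (fun n => ?_)
      (show Tendsto (fun n : ℕ => ‖u‖ * (1 / ((n:ℝ) + 1))) atTop (𝓝 0) by
        simpa using haux.const_mul ‖u‖)
    calc ‖⟪u, (za n : H)⟫‖ ≤ ‖u‖ * ‖(za n : H)‖ := norm_inner_le_norm _ _
      _ ≤ ‖u‖ * (1 / ((n:ℝ) + 1)) := by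
          refine mul_le_mul_of_nonneg_left ?_ (norm_nonneg u)
          exact (hj1 n).le
  obtain ⟨φ, hφ, hdiff⟩ := key_subseq hAc hBc hdom hcomp za hwk h1 h2
  have hdiff' : Tendsto (fun n => ‖B (z (φ n)) - A (za (φ n))‖) atTop (𝓝 0) := by
    have h0 := hdiff.norm
    rw [norm_zero] at h0
    have heq : (fun n => ‖B ⟨(za (φ n) : H), (hdom _).mpr (za (φ n)).2⟩ - A (za (φ n))‖)
        = fun n => ‖B (z (φ n)) - A (za (φ n))‖ := by
      funext n; rw [hBeq]
    rwa [heq] at h0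
  have hAnorm : Tendsto (fun n => ‖A (za (φ n))‖) atTop (𝓝 1) := by
    rw [tendsto_iff_dist_tendsto_zero]
    refine squeeze_zero (fun n => dist_nonneg) (fun n => ?_) hdiff'
    rw [Real.dist_eq]
    have h0 : |‖A (za (φ n))‖ - ‖B (z (φ n))‖| ≤ ‖A (za (φ n)) - B (z (φ n))‖ :=
      abs_norm_sub_norm_le _ _
    rw [hyapp.1 (j (φ n))] at h0
    rw [← norm_neg (A (za (φ n)) - B (z (φ n))), neg_sub] at h0
    exact h0
  have hev : ∀ᶠ n in atTop, (1:ℝ)/2 ≤ ‖A (za (φ n))‖ :=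
    hAnorm.eventually (eventually_ge_nhds (by norm_num))
  obtain ⟨N, hN⟩ := Filter.eventually_atTop.mp hev
  have hApos : ∀ n : ℕ, (1:ℝ)/2 ≤ ‖A (za (φ (n + N)))‖ := fun n => hN (n + N) (Nat.le_add_left _ _)
  set c : ℕ → ℝ := fun n => ‖A (za (φ (n + N)))‖⁻¹ with hcdef
  have hcpos : ∀ n, 0 < c n := fun n => inv_pos.mpr (lt_of_lt_of_le (by norm_num) (hApos n))
  have hcle : ∀ n, c n ≤ 2 := by
    intro n
    rw [hcdef]
    have h0 : (1:ℝ)/2 ≤ ‖A (za (φ (n + N)))‖ := hApos n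
    rw [inv_le_comm₀ (lt_of_lt_of_le (by norm_num) h0) (by norm_num)]
    linarith
  set x' : ℕ → A.domain := fun n => ((c n : ℝ) : ℂ) • za (φ (n + N)) with hx'def
  have hx'A : ∀ n, A (x' n) = ((c n : ℝ) : ℂ) • A (za (φ (n + N))) := fun n => A.map_smul _ _
  have hx'Anorm : ∀ n, ‖A (x' n)‖ = 1 := by
    intro n
    rw [hx'A, norm_smul, Complex.norm_real, Real.norm_eq_abs, abs_of_pos (hcpos n)]
    exact inv_mul_cancel₀ (ne_of_gt (lt_of_lt_of_le (by norm_num : (0:ℝ) < 1/2) (hApos n)))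
  have hcast2 : ∀ n : ℕ, ((n:ℝ) + 1) ≤ ((φ (n + N) : ℝ) + 1) := by
    intro n
    have h0 : n ≤ φ (n + N) := le_trans (Nat.le_add_right n N) hφ.le_apply
    exact_mod_cast add_le_add_left (Nat.cast_le.mpr h0) 1
  have hznorm_le : ∀ n : ℕ, ‖(z (φ (n + N)) : H)‖ ≤ 1 / ((n:ℝ) + 1) := fun n =>
    (hj1 (φ (n + N))).le.trans (one_div_le_one_div_of_le (by positivity) (hcast2 n))
  have hx'0 : Tendsto (fun n => (x' n : H)) atTop (𝓝 0) := by
    have hb : ∀ n, ‖(x' n : H)‖ ≤ 2 * (1 / ((n:ℝ) + 1)) := by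
      intro n
      have hcoe : ((x' n : H)) = ((c n : ℝ) : ℂ) • ((za (φ (n + N)) : H)) := rfl
      rw [hcoe, norm_smul, Complex.norm_real, Real.norm_eq_abs, abs_of_pos (hcpos n)]
      exact mul_le_mul (hcle n) (hznorm_le n) (norm_nonneg _) (by norm_num)
    exact squeeze_zero_norm hb (by simpa using haux.const_mul 2)
  have hx'M : ∀ n, ((x' n : H)) ∈ M := by
    intro n
    have hcoe : ((x' n : H)) = ((c n : ℝ) : ℂ) • ((za (φ (n + N)) : H)) := rfl
    rw [hcoe]
    exact M.smul_mem _ (hyM (j (φ (n + N))))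
  have hpos := hA x' hx'M ⟨hx'Anorm, hx'0⟩
  set s : ℕ → ℝ := fun n => brkRe G (A (x' n)) (A (x' n)) with hsdef
  set r : ℕ → ℝ := fun n => brkRe G (A (za (φ (n + N)))) (A (za (φ (n + N)))) with hrdef
  set b : ℕ → ℝ := fun n => brkRe G (B (z (φ (n + N)))) (B (z (φ (n + N)))) with hbdef
  have hsr : ∀ n, s n = (c n) ^ 2 * r n := by
    intro n
    rw [hsdef]
    simp only
    rw [hx'A]
    exact brkRe_real_smul G (c n) _
  have hbsmall : ∀ n, b n < 1 / ((n:ℝ) + 1) := fun n =>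
    lt_of_lt_of_le (hj2 (φ (n + N))) (one_div_le_one_div_of_le (by positivity) (hcast2 n))
  have herr : ∀ n, |r n - b n| ≤ ‖G‖ * (‖A (za (φ (n + N))) - B (z (φ (n + N)))‖ *
      (‖A (za (φ (n + N)))‖ + ‖B (z (φ (n + N)))‖)) := fun n => abs_brkRe_sub_le G _ _
  have hterm : Tendsto (fun n => ‖A (za (φ (n + N))) - B (z (φ (n + N)))‖) atTop (𝓝 0) := by
    have h0 := hdiff'.comp (tendsto_add_atTop_nat N)
    have heq : ((fun n => ‖B (z (φ n)) - A (za (φ n))‖) ∘ fun n => n + N)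
        = fun n => ‖A (za (φ (n + N))) - B (z (φ (n + N)))‖ := by
      funext n
      simp only [Function.comp_apply]
      rw [norm_sub_rev]
    rwa [heq] at h0
  have hsumn : Tendsto (fun n => ‖A (za (φ (n + N)))‖ + ‖B (z (φ (n + N)))‖) atTop (𝓝 2) := by
    have hA1 := hAnorm.comp (tendsto_add_atTop_nat N)
    have hB1 : (fun n : ℕ => ‖B (z (φ (n + N)))‖) = fun _ => (1:ℝ) :=
      funext fun n => hyapp.1 _
    have := hA1.add (hB1 ▸ tendsto_const_nhds : Tendsto (fun n : ℕ => ‖B (z (φ (n + N)))‖) atTop (𝓝 1))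
    norm_num at this
    exact this
  have herr0 : Tendsto (fun n => ‖G‖ * (‖A (za (φ (n + N))) - B (z (φ (n + N)))‖ *
      (‖A (za (φ (n + N)))‖ + ‖B (z (φ (n + N)))‖))) atTop (𝓝 0) := by
    have := (hterm.mul hsumn).const_mul ‖G‖
    simpa using this
  have habs0 : Tendsto (fun n => |r n - b n|) atTop (𝓝 0) :=
    squeeze_zero (fun n => abs_nonneg _) herr herr0
  have hsb : ∀ n, -‖G‖ ≤ s n := by
    intro n
    have h0 := abs_brkRe_le G (A (x' n))
    rw [hx'Anorm n] at h0
    simp only [mul_one] at h0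
    exact neg_le_of_abs_le h0
  have hliminf_le : atTop.liminf s ≤ 0 := by
    have hbUnd : atTop.IsBoundedUnder (· ≥ ·) s :=
      ⟨-‖G‖, Filter.eventually_map.2 (Filter.Eventually.of_forall hsb)⟩
    have hup : ∀ ε : ℝ, 0 < ε → atTop.liminf s ≤ ε := by
      intro ε hε
      refine Filter.liminf_le_of_frequently_le ?_ hbUnd
      have hsbound : ∀ n, s n ≤ 4 * (1 / ((n:ℝ) + 1) + |r n - b n|) := by
        intro n
        have h0 := hsr n
        have hrhs0 : (0:ℝ) ≤ 4 * (1 / ((n:ℝ) + 1) + |r n - b n|) := by positivity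
        have hr : r n ≤ 1 / ((n:ℝ) + 1) + |r n - b n| := by
          have h1 := hbsmall n
          have h2 := le_abs_self (r n - b n)
          linarith
        rcases le_or_gt (r n) 0 with h | h
        · have : (c n) ^ 2 * r n ≤ 0 := mul_nonpos_of_nonneg_of_nonpos (sq_nonneg _) h
          linarith
        · have hc2 : (c n) ^ 2 ≤ 4 := by nlinarith [hcle n, hcpos n]
          have h3 : (c n) ^ 2 * r n ≤ 4 * r n := mul_le_mul_of_nonneg_right hc2 h.le
          have h4 : 4 * r n ≤ 4 * (1 / ((n:ℝ) + 1) + |r n - b n|) := by linarith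
          linarith
      have hRHS : Tendsto (fun n : ℕ => 4 * (1 / ((n:ℝ) + 1) + |r n - b n|)) atTop (𝓝 0) := by
        have := (haux.add habs0).const_mul 4
        simpa using this
      have hevε : ∀ᶠ n in atTop, s n ≤ ε := by
        filter_upwards [hRHS.eventually (eventually_lt_nhds hε)] with n hn
        exact le_trans (hsbound n) hn.le
      exact hevε.frequently
    by_contra hpos2
    push_neg at hpos2
    have := hup (atTop.liminf s / 2) (half_pos hpos2)
    linarith
  linarith

end Statement10Aux4

section Statement10Aux5

variable [CompleteSpace H] {A B : H →ₗ.[ℂ] H}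

omit [CompleteSpace H] in
lemma brkRe_neg_apply (G : H →L[ℂ] H) (x y : H) : brkRe (-G) x y = - brkRe G x y := by
  simp [brkRe, brk, inner_neg_left]

omit [CompleteSpace H] in
lemma piMinusCond_iff_neg (G : H →L[ℂ] H) (A : H →ₗ.[ℂ] H) (l : ℂ) (M : Submodule ℂ H) :
    PiMinusCond G A l M ↔ PiPlusCond (-G) A l M := by
  constructor
  · intro h x hxM hxa
    have h0 := h x hxM hxa
    have hb : ∀ n, |brkRe G ((x n : H)) ((x n : H))| ≤ ‖G‖ := by
      intro n
      have h1 := abs_brkRe_le G ((x n : H))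
      rw [hxa.1 n] at h1
      simpa using h1
    have h2 := (limsup_neg_iff_pos_liminf_neg hb).mp h0
    have heq : (fun n => brkRe (-G) ((x n : H)) ((x n : H)))
        = fun n => - brkRe G ((x n : H)) ((x n : H)) :=
      funext fun n => brkRe_neg_apply G _ _
    rwa [heq]
  · intro h x hxM hxa
    have h0 := h x hxM hxa
    have hb : ∀ n, |brkRe G ((x n : H)) ((x n : H))| ≤ ‖G‖ := by
      intro n
      have h1 := abs_brkRe_le G ((x n : H))
      rw [hxa.1 n] at h1
      simpa using h1
    refine (limsup_neg_iff_pos_liminf_neg hb).mpr ?_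
    have heq : (fun n => brkRe (-G) ((x n : H)) ((x n : H)))
        = fun n => - brkRe G ((x n : H)) ((x n : H)) :=
      funext fun n => brkRe_neg_apply G _ _
    rwa [heq] at h0

omit [CompleteSpace H] in
lemma inftyPiMinusCond_iff_neg (G : H →L[ℂ] H) (A : H →ₗ.[ℂ] H) (M : Submodule ℂ H) :
    InftyPiMinusCond G A M ↔ InftyPiPlusCond (-G) A M := by
  constructor
  · intro h x hxM hxa
    have h0 := h x hxM hxa
    have hb : ∀ n, |brkRe G (A (x n)) (A (x n))| ≤ ‖G‖ := by
      intro n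
      have h1 := abs_brkRe_le G (A (x n))
      rw [hxa.1 n] at h1
      simpa using h1
    have h2 := (limsup_neg_iff_pos_liminf_neg hb).mp h0
    have heq : (fun n => brkRe (-G) (A (x n)) (A (x n)))
        = fun n => - brkRe G (A (x n)) (A (x n)) :=
      funext fun n => brkRe_neg_apply G _ _
    rwa [heq]
  · intro h x hxM hxa
    have h0 := h x hxM hxa
    have hb : ∀ n, |brkRe G (A (x n)) (A (x n))| ≤ ‖G‖ := by
      intro n
      have h1 := abs_brkRe_le G (A (x n))
      rw [hxa.1 n] at h1
      simpa using h1
    refine (limsup_neg_iff_pos_liminf_neg hb).mpr ?_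
    have heq : (fun n => brkRe (-G) (A (x n)) (A (x n)))
        = fun n => - brkRe G (A (x n)) (A (x n)) :=
      funext fun n => brkRe_neg_apply G _ _
    rwa [heq] at h0

omit [CompleteSpace H] in
lemma piPlusCond_top_of_not_ap (G : H →L[ℂ] H) {A : H →ₗ.[ℂ] H} {l : ℂ}
    (h : l ∉ sigmaAp A) : PiPlusCond G A l ⊤ :=
  fun x _ hx => absurd ⟨x, hx⟩ h

omit [CompleteSpace H] in
lemma inftyPiPlusCond_top_of_bdd (G : H →L[ℂ] H) {A : H →ₗ.[ℂ] H}
    (h : IsBoundedOp A) : InftyPiPlusCond G A ⊤ := by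
  intro x _ hx
  exfalso
  obtain ⟨C, hC⟩ := h
  have h1 : Tendsto (fun n => C * ‖(x n : H)‖) atTop (𝓝 0) := by
    have h2 := hx.2.norm
    rw [norm_zero] at h2
    simpa using h2.const_mul C
  obtain ⟨n, hn⟩ := (h1.eventually (eventually_lt_nhds one_pos)).exists
  have h3 := hC (x n)
  rw [hx.1 n] at h3
  linarith

lemma mem_extSet_coe {Pf : ℂ → Prop} {Pinf : Prop} (l : ℂ) :
    ((l : OnePoint ℂ) ∈ extSet Pf Pinf) ↔ Pf l := by
  constructor
  · rintro (⟨l', hl, h⟩ | ⟨h, _⟩)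
    · rwa [OnePoint.coe_eq_coe.mp hl]
    · exact absurd h (OnePoint.coe_ne_infty l)
  · intro h
    exact Or.inl ⟨l, rfl, h⟩

lemma mem_extSet_infty {Pf : ℂ → Prop} {Pinf : Prop} :
    ((∞ : OnePoint ℂ) ∈ extSet Pf Pinf) ↔ Pinf := by
  constructor
  · rintro (⟨l', hl, _⟩ | ⟨_, h⟩)
    · exact absurd hl.symm (OnePoint.coe_ne_infty l')
    · exact h
  · intro h
    exact Or.inr ⟨rfl, h⟩

omit [CompleteSpace H] in
lemma mem_union_coe {Pf : ℂ → Prop} {Pinf : Prop} {A : H →ₗ.[ℂ] H} (l : ℂ) :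
    ((l : OnePoint ℂ) ∈ extSet Pf Pinf ∪ extReg A) ↔ (Pf l ∨ l ∉ sigmaAp A) := by
  rw [Set.mem_union, mem_extSet_coe]
  rw [extReg, Set.mem_compl_iff, extSigmaAp, mem_extSet_coe]

omit [CompleteSpace H] in
lemma mem_union_infty {Pf : ℂ → Prop} {Pinf : Prop} {A : H →ₗ.[ℂ] H} :
    ((∞ : OnePoint ℂ) ∈ extSet Pf Pinf ∪ extReg A) ↔ (Pinf ∨ IsBoundedOp A) := by
  rw [Set.mem_union, mem_extSet_infty]
  rw [extReg, Set.mem_compl_iff, extSigmaAp, mem_extSet_infty, not_not]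

lemma union_plus_eq (G : H →L[ℂ] H) (hAc : A.IsClosed) (hBc : B.IsClosed)
    (hdom : ∀ u : H, u ∈ B.domain ↔ u ∈ A.domain)
    (hcomp : IsACompact A (fun x => B ⟨(x : H), (hdom (x : H)).mpr x.2⟩ - A x)) :
    extPiPlus G A ∪ extReg A = extPiPlus G B ∪ extReg B := by
  have hdom' : ∀ u : H, u ∈ A.domain ↔ u ∈ B.domain := fun u => (hdom u).symm
  have hcomp' : IsACompact B (fun x => A ⟨(x : H), (hdom' (x : H)).mpr x.2⟩ - B x) :=
    comp_swap hAc hdom hcomp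
  have hex : ∀ (A' B' : H →ₗ.[ℂ] H) (hAc' : A'.IsClosed) (hBc' : B'.IsClosed)
      (hdom'' : ∀ u : H, u ∈ B'.domain ↔ u ∈ A'.domain)
      (hcomp'' : IsACompact A' (fun x => B' ⟨(x : H), (hdom'' (x : H)).mpr x.2⟩ - A' x))
      (l : ℂ), (sigmaPiPlusAt G A' l ∨ l ∉ sigmaAp A') →
      (sigmaPiPlusAt G B' l ∨ l ∉ sigmaAp B') := by
    intro A' B' hAc' hBc' hdom'' hcomp'' l h
    have hMA : ∃ M, FinCodim M ∧ PiPlusCond G A' l M := by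
      rcases h with ⟨_, M, hM⟩ | hnap
      · exact ⟨M, hM⟩
      · exact ⟨⊤, finCodim_top, piPlusCond_top_of_not_ap G hnap⟩
    have hMB := transfer_plus G hAc' hBc' hdom'' hcomp'' l hMA
    by_cases hb : l ∈ sigmaAp B'
    · exact Or.inl ⟨hb, hMB⟩
    · exact Or.inr hb
  have hexinf : ∀ (A' B' : H →ₗ.[ℂ] H) (hAc' : A'.IsClosed) (hBc' : B'.IsClosed)
      (hdom'' : ∀ u : H, u ∈ B'.domain ↔ u ∈ A'.domain)
      (hcomp'' : IsACompact A' (fun x => B' ⟨(x : H), (hdom'' (x : H)).mpr x.2⟩ - A' x)),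
      (sigmaPiPlusInfty G A' ∨ IsBoundedOp A') →
      (sigmaPiPlusInfty G B' ∨ IsBoundedOp B') := by
    intro A' B' hAc' hBc' hdom'' hcomp'' h
    rcases h with ⟨hnb, M, hfc, hcond⟩ | hbdd
    · left
      refine ⟨fun hB => hnb (isBoundedOp_of_isBoundedOp' hAc' hdom'' hcomp'' hB),
        M, hfc, transfer_infty_plus G hAc' hBc' hdom'' hcomp'' M hcond⟩
    · right
      exact isBoundedOp_of_isBoundedOp hAc' hdom'' hcomp'' hbdd
  ext p
  induction p using OnePoint.rec with
  | infty =>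
    rw [extPiPlus, extPiPlus, mem_union_infty, mem_union_infty]
    constructor
    · exact hexinf A B hAc hBc hdom hcomp
    · exact hexinf B A hBc hAc hdom' hcomp'
  | coe l =>
    rw [extPiPlus, extPiPlus, mem_union_coe, mem_union_coe]
    constructor
    · exact hex A B hAc hBc hdom hcomp l
    · exact hex B A hBc hAc hdom' hcomp' l

omit [CompleteSpace H] in
lemma extPiMinus_eq_extPiPlus_neg (G : H →L[ℂ] H) (A : H →ₗ.[ℂ] H) :
    extPiMinus G A = extPiPlus (-G) A := by
  have h1 : ∀ l, sigmaPiMinusAt G A l ↔ sigmaPiPlusAt (-G) A l := by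
    intro l
    unfold sigmaPiMinusAt sigmaPiPlusAt
    simp only [piMinusCond_iff_neg]
  have h2 : sigmaPiMinusInfty G A ↔ sigmaPiPlusInfty (-G) A := by
    unfold sigmaPiMinusInfty sigmaPiPlusInfty
    simp only [inftyPiMinusCond_iff_neg]
  unfold extPiMinus extPiPlus extSet
  ext p
  simp only [Set.mem_setOf_eq, h1, h2]

lemma ppInfty_iff (G : H →L[ℂ] H) (hAc : A.IsClosed) (hBc : B.IsClosed)
    (hdom : ∀ u : H, u ∈ B.domain ↔ u ∈ A.domain)
    (hcomp : IsACompact A (fun x => B ⟨(x : H), (hdom (x : H)).mpr x.2⟩ - A x)) :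
    sigmaPPInfty G A ↔ sigmaPPInfty G B := by
  have hdom' : ∀ u : H, u ∈ A.domain ↔ u ∈ B.domain := fun u => (hdom u).symm
  have hcomp' : IsACompact B (fun x => A ⟨(x : H), (hdom' (x : H)).mpr x.2⟩ - B x) :=
    comp_swap hAc hdom hcomp
  constructor
  · rintro ⟨hnb, hcond⟩
    exact ⟨fun hB => hnb (isBoundedOp_of_isBoundedOp' hAc hdom hcomp hB),
      transfer_infty_plus G hAc hBc hdom hcomp ⊤ hcond⟩
  · rintro ⟨hnb, hcond⟩
    exact ⟨fun hA => hnb (isBoundedOp_of_isBoundedOp hAc hdom hcomp hA),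
      transfer_infty_plus G hBc hAc hdom' hcomp' ⊤ hcond⟩

omit [CompleteSpace H] in
lemma mmInfty_iff_pp_neg (G : H →L[ℂ] H) (A : H →ₗ.[ℂ] H) :
    sigmaMMInfty G A ↔ sigmaPPInfty (-G) A := by
  unfold sigmaMMInfty sigmaPPInfty
  simp only [inftyPiMinusCond_iff_neg]

end Statement10Aux5

/-- Stability of spectral points of type `π₊`/`π₋` under `A`-compact
perturbations `B − A` with `dom B = dom A`. -/
theorem statement_10 [CompleteSpace H] (G : H →L[ℂ] H) (hG : IsSelfAdjoint G)
    (A B : H →ₗ.[ℂ] H) (hAc : A.IsClosed) (hAd : Dense (A.domain : Set H))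
    (hBc : B.IsClosed) (hBd : Dense (B.domain : Set H))
    (hdom : ∀ u : H, u ∈ B.domain ↔ u ∈ A.domain)
    (hcomp : IsACompact A (fun x => B ⟨(x : H), (hdom (x : H)).mpr x.2⟩ - A x)) :
    extPiPlus G A ∪ extReg A = extPiPlus G B ∪ extReg B ∧
    extPiMinus G A ∪ extReg A = extPiMinus G B ∪ extReg B ∧
    (sigmaPPInfty G A ↔ sigmaPPInfty G B) ∧
    (sigmaMMInfty G A ↔ sigmaMMInfty G B) ∧
    ((∞ : OnePoint ℂ) ∈ extReg A ↔ (∞ : OnePoint ℂ) ∈ extReg B) := by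
  refine ⟨?_, ?_, ?_, ?_, ?_⟩
  · exact union_plus_eq G hAc hBc hdom hcomp
  · rw [extPiMinus_eq_extPiPlus_neg, extPiMinus_eq_extPiPlus_neg]
    exact union_plus_eq (-G) hAc hBc hdom hcomp
  · exact ppInfty_iff G hAc hBc hdom hcomp
  · rw [mmInfty_iff_pp_neg, mmInfty_iff_pp_neg]
    exact ppInfty_iff (-G) hAc hBc hdom hcomp
  · have hA : ((∞ : OnePoint ℂ) ∈ extReg A) ↔ IsBoundedOp A := by
      rw [extReg, Set.mem_compl_iff, extSigmaAp, mem_extSet_infty, not_not]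
    have hB : ((∞ : OnePoint ℂ) ∈ extReg B) ↔ IsBoundedOp B := by
      rw [extReg, Set.mem_compl_iff, extSigmaAp, mem_extSet_infty, not_not]
    rw [hA, hB]
    constructor
    · exact isBoundedOp_of_isBoundedOp hAc hdom hcomp
    · exact isBoundedOp_of_isBoundedOp' hAc hdom hcomp

end Paper
end
end

section
/- Let A be a closed, densely defined G-symmetric operator in H. Then every finite spectral point of positive type and every finite spectral point of negative type of A is real (σ_{++}(A) ∩ ℂ ⊆ ℝ and σ_{−−}(A) ∩ ℂ ⊆ ℝ), and for every non-real λ ∈ σ_{π+}(A) ∪ σ_{π−}(A) the operator A − λ is a Φ₊-operator, i.e. ker(A−λ) is finite-dimensional and ran(A−λ) is closed. -/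
open Filter Topology OnePoint Set

noncomputable section

namespace Paper

variable {H : Type*} [NormedAddCommGroup H] [InnerProductSpace ℂ H]

section Statement11Aux

variable [CompleteSpace H]

private lemma brk_conj (G : H →L[ℂ] H) (hG : IsSelfAdjoint G) (x y : H) :
    (starRingEnd ℂ) (brk G x y) = brk G y x := by
  have hsymm := ContinuousLinearMap.isSelfAdjoint_iff_isSymmetric.mp hG
  unfold brk
  rw [inner_conj_symm]
  exact (hsymm y x).symm

private lemma brk_self_im (G : H →L[ℂ] H) (hG : IsSelfAdjoint G) (x : H) :
    (brk G x x).im = 0 :=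
  Complex.conj_eq_iff_im.mp (brk_conj G hG x x)

private lemma brk_A_self_im (G : H →L[ℂ] H) (hG : IsSelfAdjoint G) {A : H →ₗ.[ℂ] H}
    (hsym : GSymm G A) (x : A.domain) : (brk G (A x) (x : H)).im = 0 := by
  apply Complex.conj_eq_iff_im.mp
  rw [brk_conj G hG (A x) (x : H), ← hsym x x]

private lemma brk_T_im (G : H →L[ℂ] H) (hG : IsSelfAdjoint G) {A : H →ₗ.[ℂ] H}
    (hsym : GSymm G A) (l : ℂ) (x : A.domain) :
    (brk G (A x - l • (x : H)) (x : H)).im = l.im * brkRe G (x : H) (x : H) := by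
  have h1 : brk G (A x - l • (x : H)) (x : H)
      = brk G (A x) (x : H) - (starRingEnd ℂ) l * brk G (x : H) (x : H) := by
    unfold brk
    rw [map_sub, inner_sub_left, _root_.map_smul, inner_smul_left]
  rw [h1, Complex.sub_im, Complex.mul_im, brk_A_self_im G hG hsym x,
      brk_self_im G hG, Complex.conj_re, Complex.conj_im]
  unfold brkRe
  ring

private lemma brk_im_abs_le (G : H →L[ℂ] H) (w y : H) :
    |(brk G w y).im| ≤ ‖G‖ * ‖w‖ * ‖y‖ := by
  have h1 : |(brk G w y).im| ≤ ‖brk G w y‖ := by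
    exact Complex.abs_im_le_norm _
  have h2 : ‖(inner ℂ (G w) y : ℂ)‖ ≤ ‖G w‖ * ‖y‖ := norm_inner_le_norm _ _
  have h3 : ‖G w‖ ≤ ‖G‖ * ‖w‖ := G.le_opNorm w
  have h4 : ‖G w‖ * ‖y‖ ≤ ‖G‖ * ‖w‖ * ‖y‖ :=
    mul_le_mul_of_nonneg_right h3 (norm_nonneg y)
  exact h1.trans (h2.trans h4)

private lemma brkRe_tendsto_zero (G : H →L[ℂ] H) (hG : IsSelfAdjoint G) {A : H →ₗ.[ℂ] H}
    (hsym : GSymm G A) {l : ℂ} (him : l.im ≠ 0) {x : ℕ → A.domain}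
    (hx : IsApproxSeq A l x) :
    Tendsto (fun n => brkRe G (x n : H) (x n : H)) atTop (𝓝 0) := by
  have him' : 0 < |l.im| := abs_pos.mpr him
  apply squeeze_zero_norm
    (a := fun n => |l.im|⁻¹ * (‖G‖ * ‖A (x n) - l • ((x n : H))‖))
  · intro n
    have he := brk_T_im G hG hsym l (x n)
    have h2 : |l.im| * |brkRe G (x n : H) (x n : H)|
        ≤ ‖G‖ * ‖A (x n) - l • ((x n : H))‖ := by
      have hb := brk_im_abs_le G (A (x n) - l • ((x n : H))) ((x n : H))
      rw [hx.1 n, mul_one, he, abs_mul] at hb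
      exact hb
    rw [Real.norm_eq_abs, inv_mul_eq_div, le_div_iff₀ him', mul_comm]
    exact h2
  · have h0 : Tendsto (fun n => ‖A (x n) - l • ((x n : H))‖) atTop (𝓝 0) :=
      tendsto_zero_iff_norm_tendsto_zero.mp hx.2
    have := (h0.const_mul ‖G‖).const_mul |l.im|⁻¹
    simpa using this

private lemma no_approx_seq (G : H →L[ℂ] H) (hG : IsSelfAdjoint G) {A : H →ₗ.[ℂ] H}
    (hsym : GSymm G A) {l : ℂ} (him : l.im ≠ 0) {M : Submodule ℂ H}
    (hP : PiPlusCond G A l M ∨ PiMinusCond G A l M) :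
    ∀ x : ℕ → A.domain, (∀ n, (x n : H) ∈ M) → ¬ IsApproxSeq A l x := by
  intro x hmem hx
  have h0 := brkRe_tendsto_zero G hG hsym him hx
  rcases hP with hP | hP
  · have := hP x hmem hx
    rw [h0.liminf_eq] at this
    exact lt_irrefl 0 this
  · have := hP x hmem hx
    rw [h0.limsup_eq] at this
    exact lt_irrefl 0 this

private lemma T_smul (A : H →ₗ.[ℂ] H) (l : ℂ) (x : A.domain) (t : ℂ) :
    A (t • x) - l • (((t • x : A.domain) : H)) = t • (A x - l • (x : H)) := by
  rw [A.map_smul, Submodule.coe_smul, smul_sub, smul_comm l t]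

private lemma ker_inter {A : H →ₗ.[ℂ] H} {l : ℂ} {M : Submodule ℂ H}
    (hns : ∀ x : ℕ → A.domain, (∀ n, (x n : H) ∈ M) → ¬ IsApproxSeq A l x) :
    ∀ x : H, x ∈ kerAt A l → x ∈ M → x = 0 := by
  intro x hk hm
  by_contra hx0
  obtain ⟨hdom, hAx⟩ := hk
  have hnx : ‖x‖ ≠ 0 := norm_ne_zero_iff.mpr hx0
  set t : ℂ := ((‖x‖ : ℂ))⁻¹ with ht
  set u : A.domain := t • (⟨x, hdom⟩ : A.domain) with hu
  have hu1 : ‖(u : H)‖ = 1 := by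
    rw [hu, Submodule.coe_smul]
    simp only [norm_smul, ht, norm_inv, Complex.norm_real, Real.norm_eq_abs,
      abs_norm]
    field_simp
  have humem : (u : H) ∈ M := by
    rw [hu, Submodule.coe_smul]
    exact M.smul_mem t hm
  have hTu : A u - l • (u : H) = 0 := by
    rw [hu, T_smul]
    have : A (⟨x, hdom⟩ : A.domain) - l • ((⟨x, hdom⟩ : A.domain) : H) = 0 := by
      rw [hAx]; simp
    rw [this, smul_zero]
  apply hns (fun _ => u) (fun _ => humem)
  refine ⟨fun _ => hu1, ?_⟩
  rw [show (fun _ : ℕ => A u - l • (u : H)) = fun _ => (0 : H) from funext fun _ => hTu]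
  exact tendsto_const_nhds

private lemma bdd_below_of_no_seq {A : H →ₗ.[ℂ] H} {l : ℂ} {M : Submodule ℂ H}
    (hns : ∀ x : ℕ → A.domain, (∀ n, (x n : H) ∈ M) → ¬ IsApproxSeq A l x) :
    ∃ c : ℝ, 0 < c ∧ ∀ x : A.domain, (x : H) ∈ M →
      c * ‖(x : H)‖ ≤ ‖A x - l • (x : H)‖ := by
  by_contra hcon
  push_neg at hcon
  have hsel : ∀ n : ℕ, ∃ x : A.domain, (x : H) ∈ M ∧
      ‖A x - l • (x : H)‖ < (1 / (n + 1)) * ‖(x : H)‖ := by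
    intro n
    obtain ⟨x, hx1, hx2⟩ := hcon (1 / (n + 1)) (by positivity)
    exact ⟨x, hx1, hx2⟩
  choose f hfm hf using hsel
  have hfne : ∀ n, ‖((f n : H))‖ ≠ 0 := by
    intro n h0
    have := hf n
    rw [h0, mul_zero] at this
    exact absurd this (not_lt.mpr (norm_nonneg _))
  set z : ℕ → A.domain := fun n => ((‖(f n : H)‖ : ℂ))⁻¹ • f n with hz
  have hz1 : ∀ n, ‖((z n : H))‖ = 1 := by
    intro n
    rw [hz]
    simp only [Submodule.coe_smul, norm_smul, norm_inv, Complex.norm_real,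
      Real.norm_eq_abs, abs_norm]
    exact inv_mul_cancel₀ (hfne n)
  have hzm : ∀ n, ((z n : H)) ∈ M := by
    intro n
    rw [hz]
    simp only [Submodule.coe_smul]
    exact M.smul_mem _ (hfm n)
  apply hns z hzm
  refine ⟨hz1, ?_⟩
  apply squeeze_zero_norm (a := fun n : ℕ => 1 / (n + 1))
  · intro n
    have hTz : A (z n) - l • ((z n : H)) =
        ((‖(f n : H)‖ : ℂ))⁻¹ • (A (f n) - l • ((f n : H))) := T_smul A l (f n) _
    rw [hTz, norm_smul]
    simp only [norm_inv, Complex.norm_real, Real.norm_eq_abs, abs_norm]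
    have hpos : 0 < ‖((f n : H))‖ := lt_of_le_of_ne (norm_nonneg _) (Ne.symm (hfne n))
    rw [inv_mul_eq_div, div_le_iff₀ hpos]
    exact le_of_lt (hf n)
  · exact tendsto_one_div_add_atTop_nhds_zero_nat

private lemma closed_lim {A : H →ₗ.[ℂ] H} (hAc : A.IsClosed) (l : ℂ)
    {v : ℕ → A.domain} {xx z : H}
    (hv : Tendsto (fun n => ((v n : H))) atTop (𝓝 xx))
    (hz : Tendsto (fun n => A (v n) - l • ((v n : H))) atTop (𝓝 z)) :
    ∃ h : xx ∈ A.domain, A ⟨xx, h⟩ - l • xx = z := by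
  have hA : Tendsto (fun n => A (v n)) atTop (𝓝 (z + l • xx)) := by
    have h2 := hz.add (hv.const_smul l)
    simpa using h2
  have hmem : ((xx, z + l • xx) : H × H) ∈ A.graph := by
    refine hAc.mem_of_tendsto (hv.prodMk_nhds hA) (Eventually.of_forall fun n => ?_)
    exact A.mem_graph (v n)
  rw [LinearPMap.mem_graph_iff] at hmem
  obtain ⟨y, hy1, hy2⟩ := hmem
  have hy1' : (y : H) = xx := hy1
  have hy2' : A y = z + l • xx := hy2
  have hxd : xx ∈ A.domain := hy1' ▸ y.2
  refine ⟨hxd, ?_⟩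
  have hyy : (⟨xx, hxd⟩ : A.domain) = y := Subtype.ext hy1'.symm
  rw [hyy, hy2']
  exact add_sub_cancel_right z (l • xx)

private lemma isClosed_sup_findim (R F : Submodule ℂ H) (hR : IsClosed (R : Set H))
    (hF : FiniteDimensional ℂ F) : IsClosed ((R ⊔ F : Submodule ℂ H) : Set H) := by
  haveI : CompleteSpace R := hR.completeSpace_coe
  set D : H →L[ℂ] H := ContinuousLinearMap.id ℂ H - R.subtypeL.comp R.orthogonalProjectionOnto
    with hD
  have hDval : ∀ u : H, D u = u - (R.orthogonalProjectionOnto u : H) := by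
    intro u; simp [hD]
  have hDR : ∀ u ∈ R, D u = 0 := by
    intro u hu
    rw [hDval, ← Submodule.starProjection_apply, Submodule.starProjection_eq_self_iff.mpr hu, sub_self]
  have hDorth : ∀ u : H, D u ∈ Rᗮ := by
    intro u
    rw [hDval]
    exact Submodule.sub_starProjection_mem_orthogonal u
  have hDid : ∀ u ∈ Rᗮ, D u = u := by
    intro u hu
    rw [hDval, Submodule.orthogonalProjectionOnto_apply_of_mem_orthogonal hu]
    simp
  set F' : Submodule ℂ H := F.map (D : H →ₗ[ℂ] H) with hF'
  haveI : FiniteDimensional ℂ F' := Module.Finite.map F (D : H →ₗ[ℂ] H)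
  have hF'R : ∀ y ∈ F', y ∈ Rᗮ := by
    rintro y ⟨u, hu, rfl⟩
    exact hDorth u
  have hsup : R ⊔ F = R ⊔ F' := by
    apply le_antisymm
    · refine sup_le le_sup_left (fun f hf => ?_)
      have h1 : f - D f ∈ R := by
        rw [hDval]
        simp only [sub_sub_cancel]
        exact (R.orthogonalProjectionOnto f).2
      have h2 : D f ∈ F' := ⟨f, hf, rfl⟩
      have : f = (f - D f) + D f := by abel
      rw [this]
      exact Submodule.add_mem_sup h1 h2
    · refine sup_le le_sup_left ?_
      rintro y ⟨u, hu, rfl⟩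
      have h1 : -(u - D u) ∈ R := by
        apply neg_mem
        rw [hDval]
        simp only [sub_sub_cancel]
        exact (R.orthogonalProjectionOnto u).2
      have : (D : H →ₗ[ℂ] H) u = -(u - D u) + u := by
        simp only [ContinuousLinearMap.coe_coe]
        abel
      rw [this]
      exact Submodule.add_mem_sup h1 hu
  rw [hsup]
  apply IsSeqClosed.isClosed
  intro y z hy hyz
  have hmem : ∀ n, y n ∈ R ⊔ F' := hy
  have hdec : ∀ n, ∃ r ∈ R, ∃ f ∈ F', r + f = y n := by
    intro n
    obtain ⟨r, hr, f, hf, hrf⟩ := Submodule.mem_sup.mp (hmem n)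
    exact ⟨r, hr, f, hf, hrf⟩
  choose r hr f hf hrf using hdec
  have hDy : ∀ n, D (y n) = f n := by
    intro n
    rw [← hrf n, map_add, hDR (r n) (hr n), hDid (f n) (hF'R _ (hf n)), zero_add]
  have hfD : Tendsto (fun n => D (y n)) atTop (𝓝 (D z)) :=
    (D.continuous.tendsto z).comp hyz
  have hftend : Tendsto f atTop (𝓝 (D z)) := by
    rw [show f = fun n => D (y n) from funext fun n => (hDy n).symm]
    exact hfD
  have hDzF' : D z ∈ F' := by
    have hclF' : IsClosed (F' : Set H) := Submodule.closed_of_finiteDimensional F'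
    exact hclF'.mem_of_tendsto hftend (Eventually.of_forall hf)
  have hrtend : Tendsto r atTop (𝓝 (z - D z)) := by
    have : r = fun n => y n - f n := funext fun n => by rw [← hrf n]; abel
    rw [this]
    exact hyz.sub hftend
  have hrR : z - D z ∈ R := hR.mem_of_tendsto hrtend (Eventually.of_forall hr)
  have : z = (z - D z) + D z := by abel
  rw [this]
  exact Submodule.add_mem_sup hrR hDzF'

private lemma scale_bound {A : H →ₗ.[ℂ] H} {l : ℂ} {S : Set H} {ε : ℝ}
    (hS : ∀ (t : ℂ) (x : H), x ∈ S → t • x ∈ S)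
    (h : ∀ x : A.domain, ‖(x : H)‖ = 1 → (x : H) ∈ S → ε ≤ ‖A x - l • (x : H)‖) :
    ∀ x : A.domain, (x : H) ∈ S → ε * ‖(x : H)‖ ≤ ‖A x - l • (x : H)‖ := by
  intro x hx
  rcases eq_or_ne ((x : H)) 0 with h0 | h0
  · have hx0 : x = 0 := Subtype.ext (by exact h0)
    subst hx0
    simp
  · set t : ℂ := ((‖(x : H)‖ : ℂ))⁻¹ with ht
    have hn0 : ‖(x : H)‖ ≠ 0 := norm_ne_zero_iff.mpr h0
    have hnorm : ‖((t • x : A.domain) : H)‖ = 1 := by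
      rw [Submodule.coe_smul]
      simp only [norm_smul, ht, norm_inv, Complex.norm_real, Real.norm_eq_abs, abs_norm]
      field_simp
    have hmem : ((t • x : A.domain) : H) ∈ S := by
      rw [Submodule.coe_smul]
      exact hS t _ hx
    have hb := h (t • x) hnorm hmem
    rw [T_smul, norm_smul] at hb
    simp only [ht, norm_inv, Complex.norm_real, Real.norm_eq_abs, abs_norm] at hb
    rw [inv_mul_eq_div, le_div_iff₀ (lt_of_le_of_ne (norm_nonneg _) (Ne.symm hn0))] at hb
    linarith [hb]

private lemma ranClosed {A : H →ₗ.[ℂ] H} (hAc : A.IsClosed) (l : ℂ) {M : Submodule ℂ H}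
    (hM : FinCodim M) {c : ℝ} (hc : 0 < c)
    (hbd : ∀ x : A.domain, (x : H) ∈ M → c * ‖(x : H)‖ ≤ ‖A x - l • (x : H)‖) :
    IsClosed (ranAt A l) := by
  by_contra hnc
  -- Step 1: if the range is not closed, we can find unit vectors in the domain,
  -- orthogonal to any given finite-dimensional subspace of the domain, that are
  -- almost annihilated by `A - l`.
  have L1 : ∀ E : Submodule ℂ H, FiniteDimensional ℂ E → (E : Set H) ⊆ A.domain →
      ∀ ε : ℝ, 0 < ε → ∃ x : A.domain, ‖(x : H)‖ = 1 ∧ (x : H) ∈ Eᗮ ∧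
        ‖A x - l • (x : H)‖ < ε := by
    intro E hE hEd ε hε
    by_contra hni
    push_neg at hni
    have hbdE : ∀ x : A.domain, (x : H) ∈ Eᗮ → ε * ‖(x : H)‖ ≤ ‖A x - l • (x : H)‖ :=
      scale_bound (fun t x hx => Eᗮ.smul_mem t hx) hni
    apply hnc
    haveI : FiniteDimensional ℂ E := hE
    haveI : CompleteSpace E := FiniteDimensional.complete ℂ E
    set Ehat : Submodule ℂ A.domain := E.comap A.domain.subtype with hEhat
    set V : Submodule ℂ A.domain := Eᗮ.comap A.domain.subtype with hV
    set T : A.domain →ₗ[ℂ] H := A.toFun - l • A.domain.subtype with hT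
    have hTapp : ∀ x : A.domain, T x = A x - l • (x : H) := fun x => rfl
    have hsupd : ∀ x : A.domain, ∃ u ∈ Ehat, ∃ v ∈ V, u + v = x := by
      intro x
      have hu : ((E.orthogonalProjectionOnto (x : H) : H)) ∈ A.domain :=
        hEd (E.orthogonalProjectionOnto (x : H)).2
      set u : A.domain := ⟨_, hu⟩ with hudef
      refine ⟨u, ?_, x - u, ?_, by abel⟩
      · exact (E.orthogonalProjectionOnto (x : H)).2
      · show ((x - u : A.domain) : H) ∈ Eᗮ
        rw [AddSubgroupClass.coe_sub]
        exact Submodule.sub_starProjection_mem_orthogonal (x : H)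
    have hran : ranAt A l = ((Ehat.map T ⊔ V.map T : Submodule ℂ H) : Set H) := by
      ext y
      constructor
      · rintro ⟨x, rfl⟩
        obtain ⟨u, hu, v, hv, hx⟩ := hsupd x
        have : A x - l • (x : H) = T u + T v := by
          rw [← hTapp x, ← hx, map_add]
        rw [this]
        exact Submodule.add_mem_sup (Submodule.mem_map_of_mem hu)
          (Submodule.mem_map_of_mem hv)
      · intro hy
        obtain ⟨y1, hy1, y2, hy2, hyy⟩ := Submodule.mem_sup.mp hy
        obtain ⟨u, hu, rfl⟩ := hy1
        obtain ⟨v, hv, rfl⟩ := hy2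
        exact ⟨u + v, by rw [← hTapp, map_add, hyy]⟩
    rw [hran]
    haveI : FiniteDimensional ℂ Ehat := by
      have hinj : Function.Injective
          ((A.domain.subtype.comp Ehat.subtype).codRestrict E
            (fun x => x.2)) := by
        intro a b hab
        apply Subtype.ext
        apply Subtype.ext
        have := congrArg (Subtype.val) hab
        exact this
      exact FiniteDimensional.of_injective _ hinj
    haveI : FiniteDimensional ℂ (Ehat.map T) := Module.Finite.map Ehat T
    have hclV : IsClosed ((V.map T : Submodule ℂ H) : Set H) := by
      apply IsSeqClosed.isClosed
      intro y z hy hyz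
      have hsel : ∀ n, ∃ v ∈ V, T v = y n := fun n => Submodule.mem_map.mp (hy n)
      choose v hvV hvT using hsel
      have hεpos := hε
      have hcv : CauchySeq (fun n => ((v n : H))) := by
        rw [Metric.cauchySeq_iff]
        intro δ hδ
        have hyc : CauchySeq y := hyz.cauchySeq
        rw [Metric.cauchySeq_iff] at hyc
        obtain ⟨N, hN⟩ := hyc (ε * δ) (by positivity)
        refine ⟨N, fun m hm n hn => ?_⟩
        have hsub : ((v m - v n : A.domain) : H) ∈ Eᗮ := by
          rw [AddSubgroupClass.coe_sub]
          exact Eᗮ.sub_mem (hvV m) (hvV n)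
        have hb := hbdE (v m - v n) hsub
        rw [← hTapp, map_sub, hvT m, hvT n] at hb
        have hd := hN m hm n hn
        rw [dist_eq_norm] at hd ⊢
        rw [AddSubgroupClass.coe_sub] at hb
        nlinarith [norm_nonneg ((v m : H) - (v n : H))]
      obtain ⟨xx, hxx⟩ := cauchySeq_tendsto_of_complete hcv
      have hTlim : Tendsto (fun n => A (v n) - l • ((v n : H))) atTop (𝓝 z) := by
        have : (fun n => A (v n) - l • ((v n : H))) = y := by
          funext n
          rw [← hvT n, hTapp]
        rw [this]
        exact hyz
      obtain ⟨hxd, hxe⟩ := closed_lim hAc l hxx hTlim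
      refine Submodule.mem_map.mpr ⟨⟨xx, hxd⟩, ?_, ?_⟩
      · show ((⟨xx, hxd⟩ : A.domain) : H) ∈ Eᗮ
        exact E.isClosed_orthogonal.mem_of_tendsto hxx
          (Eventually.of_forall fun n => hvV n)
      · rw [hTapp]
        exact hxe
    rw [sup_comm]
    exact isClosed_sup_findim _ _ hclV inferInstance
  -- Step 2: build an orthonormal family of near-kernel vectors, and combine it
  -- into a unit vector of `M`, contradicting the lower bound on `M`.
  haveI : FiniteDimensional ℂ (H ⧸ M) := hM
  set k := Module.finrank ℂ (H ⧸ M) with hk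
  set ε : ℝ := c / (2 * ((k : ℝ) + 1)) with hε
  have hεpos : 0 < ε := by positivity
  have hfam : ∀ n : ℕ, ∃ x : Fin n → A.domain, (∀ i, ‖(x i : H)‖ = 1) ∧
      (∀ i j, i ≠ j → (inner ℂ ((x i : H)) ((x j : H)) : ℂ) = 0) ∧
      (∀ i, ‖A (x i) - l • ((x i : H))‖ < ε) := by
    intro n
    induction n with
    | zero => exact ⟨Fin.elim0, fun i => i.elim0, fun i => i.elim0, fun i => i.elim0⟩
    | succ m ih =>
      obtain ⟨x, hx1, hx2, hx3⟩ := ih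
      set E : Submodule ℂ H := Submodule.span ℂ (Set.range fun i => ((x i : H))) with hE
      haveI : FiniteDimensional ℂ E :=
        FiniteDimensional.span_of_finite ℂ (Set.finite_range _)
      have hEd : (E : Set H) ⊆ A.domain := by
        have : E ≤ A.domain := Submodule.span_le.mpr (by
          rintro - ⟨i, rfl⟩
          exact (x i).2)
        exact this
      obtain ⟨xnew, hn1, hn2, hn3⟩ := L1 E inferInstance hEd ε hεpos
      refine ⟨Fin.snoc x xnew, ?_⟩
      have horth : ∀ i : Fin m, (inner ℂ ((x i : H)) ((xnew : H)) : ℂ) = 0 := by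
        intro i
        have hm : ((x i : H)) ∈ E := Submodule.subset_span ⟨i, rfl⟩
        exact (Submodule.mem_orthogonal E (xnew : H)).mp hn2 _ hm
      refine ⟨?_, ?_, ?_⟩
      · intro i
        rcases Fin.eq_castSucc_or_eq_last i with ⟨i', rfl⟩ | rfl
        · simpa using hx1 i'
        · simpa using hn1
      · intro i j hij
        rcases Fin.eq_castSucc_or_eq_last i with ⟨i', rfl⟩ | rfl <;>
          rcases Fin.eq_castSucc_or_eq_last j with ⟨j', rfl⟩ | rfl
        · simp only [Fin.snoc_castSucc]
          exact hx2 i' j' (fun h => hij (by rw [h]))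
        · simp only [Fin.snoc_castSucc, Fin.snoc_last]
          exact horth i'
        · simp only [Fin.snoc_castSucc, Fin.snoc_last]
          rw [← inner_conj_symm, horth j', map_zero]
        · exact absurd rfl hij
      · intro i
        rcases Fin.eq_castSucc_or_eq_last i with ⟨i', rfl⟩ | rfl
        · simpa using hx3 i'
        · simpa using hn3
  obtain ⟨x, hx1, hx2, hx3⟩ := hfam (k + 1)
  have hdep : ¬ LinearIndependent ℂ (fun i : Fin (k + 1) => M.mkQ ((x i : H))) := by
    intro hli
    have hcard := hli.fintype_card_le_finrank
    rw [Fintype.card_fin] at hcard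
    omega
  obtain ⟨a, hsum, j, hj⟩ := Fintype.not_linearIndependent_iff.mp hdep
  set y0 : A.domain := ∑ i, a i • x i with hy0
  have hy0H : ((y0 : H)) = ∑ i, a i • ((x i : H)) := by
    rw [hy0]
    push_cast
    rfl
  have hy0M : ((y0 : H)) ∈ M := by
    rw [← Submodule.Quotient.mk_eq_zero M]
    have : M.mkQ ((y0 : H)) = ∑ i, a i • M.mkQ ((x i : H)) := by
      rw [hy0H, map_sum]
      simp_rw [_root_.map_smul]
    have h2 : M.mkQ ((y0 : H)) = 0 := by rw [this, hsum]
    rwa [Submodule.mkQ_apply] at h2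
  have hprod : ∀ i, (inner ℂ ((x i : H)) ((y0 : H)) : ℂ) = a i := by
    intro i
    rw [hy0H, inner_sum]
    rw [Finset.sum_eq_single i]
    · rw [inner_smul_right, inner_self_eq_norm_sq_to_K, hx1 i]
      norm_num
    · intro b _ hb
      rw [inner_smul_right, hx2 i b (fun h => hb (by rw [h])), mul_zero]
    · intro h
      exact absurd (Finset.mem_univ i) h
  have hcoef : ∀ i, ‖a i‖ ≤ ‖((y0 : H))‖ := by
    intro i
    calc ‖a i‖ = ‖(inner ℂ ((x i : H)) ((y0 : H)) : ℂ)‖ := by rw [hprod i]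
      _ ≤ ‖((x i : H))‖ * ‖((y0 : H))‖ := norm_inner_le_norm _ _
      _ = ‖((y0 : H))‖ := by rw [hx1 i, one_mul]
  have hy0ne : ((y0 : H)) ≠ 0 := by
    intro h0
    apply hj
    have := hcoef j
    rw [h0, norm_zero] at this
    exact norm_le_zero_iff.mp this
  have hTy0 : A y0 - l • ((y0 : H)) = ∑ i, a i • (A (x i) - l • ((x i : H))) := by
    have h1 : A y0 = ∑ i, a i • A (x i) := by
      rw [hy0]
      show A.toFun (∑ i, a i • x i) = ∑ i, a i • A.toFun (x i)
      rw [map_sum]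
      simp_rw [LinearMap.map_smul]
    rw [h1, hy0H, Finset.smul_sum, ← Finset.sum_sub_distrib]
    apply Finset.sum_congr rfl
    intro i _
    rw [smul_sub, smul_comm l (a i)]
  have hTbound : ‖A y0 - l • ((y0 : H))‖ ≤ ((k : ℝ) + 1) * ε * ‖((y0 : H))‖ := by
    rw [hTy0]
    calc ‖∑ i, a i • (A (x i) - l • ((x i : H)))‖
        ≤ ∑ i, ‖a i • (A (x i) - l • ((x i : H)))‖ := norm_sum_le _ _
      _ ≤ ∑ _i : Fin (k + 1), ‖((y0 : H))‖ * ε := by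
          apply Finset.sum_le_sum
          intro i _
          rw [norm_smul]
          exact mul_le_mul (hcoef i) (le_of_lt (hx3 i)) (norm_nonneg _)
            (norm_nonneg _)
      _ = ((k : ℝ) + 1) * (‖((y0 : H))‖ * ε) := by
          rw [Finset.sum_const, Finset.card_univ, Fintype.card_fin]
          push_cast
          ring
      _ = ((k : ℝ) + 1) * ε * ‖((y0 : H))‖ := by ring
  have hlow := hbd y0 hy0M
  have hpos : 0 < ‖((y0 : H))‖ := norm_pos_iff.mpr hy0ne
  have hcc : c ≤ ((k : ℝ) + 1) * ε :=
    le_of_mul_le_mul_right (by nlinarith [hlow.trans hTbound]) hpos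
  have heq : ((k : ℝ) + 1) * ε = c / 2 := by
    rw [hε]
    field_simp
  rw [heq] at hcc
  linarith

end Statement11Aux

/-- For a `G`-symmetric operator `A`, finite spectral points of
positive/negative type are real, and at non-real spectral points of type `π₊`/`π₋`
the operator `A − λ` is a `Φ₊`-operator. -/
theorem statement_11 [CompleteSpace H] (G : H →L[ℂ] H) (hG : IsSelfAdjoint G)
    (A : H →ₗ.[ℂ] H) (hAc : A.IsClosed) (hAd : Dense (A.domain : Set H))
    (hsym : GSymm G A) :
    (∀ l : ℂ, sigmaPPAt G A l → l.im = 0) ∧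
    (∀ l : ℂ, sigmaMMAt G A l → l.im = 0) ∧
    (∀ l : ℂ, l.im ≠ 0 → sigmaPiPlusAt G A l ∨ sigmaPiMinusAt G A l →
      FiniteDimensional ℂ (kerAt A l) ∧ IsClosed (ranAt A l)) := by
  have key : ∀ l : ℂ, l.im ≠ 0 → ∀ M : Submodule ℂ H,
      (PiPlusCond G A l M ∨ PiMinusCond G A l M) →
      ∀ x : ℕ → A.domain, (∀ n, (x n : H) ∈ M) → ¬ IsApproxSeq A l x :=
    fun l him M hP => no_approx_seq G hG hsym him hP
  refine ⟨?_, ?_, ?_⟩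
  · intro l hl
    by_contra him
    obtain ⟨⟨x, hx⟩, hP⟩ := hl
    exact key l him ⊤ (Or.inl hP) x (fun n => trivial) hx
  · intro l hl
    by_contra him
    obtain ⟨⟨x, hx⟩, hP⟩ := hl
    exact key l him ⊤ (Or.inr hP) x (fun n => trivial) hx
  · intro l him hPi
    obtain ⟨M, hM, hcond⟩ : ∃ M : Submodule ℂ H, FinCodim M ∧
        (PiPlusCond G A l M ∨ PiMinusCond G A l M) := by
      rcases hPi with ⟨-, M, hM, h⟩ | ⟨-, M, hM, h⟩
      exacts [⟨M, hM, Or.inl h⟩, ⟨M, hM, Or.inr h⟩]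
    have hns := key l him M hcond
    constructor
    · haveI : FiniteDimensional ℂ (H ⧸ M) := hM
      have hker0 : ∀ x : H, x ∈ kerAt A l → x ∈ M → x = 0 := ker_inter hns
      set φ : (kerAt A l) →ₗ[ℂ] (H ⧸ M) := M.mkQ.comp (kerAt A l).subtype with hφ
      apply FiniteDimensional.of_injective φ
      have hkerφ : LinearMap.ker φ = ⊥ := by
        rw [eq_bot_iff]
        intro a ha
        have h1 : M.mkQ ((a : H)) = 0 := ha
        have h2 : (a : H) ∈ M := by
          rwa [Submodule.mkQ_apply, Submodule.Quotient.mk_eq_zero] at h1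
        have h3 : (a : H) = 0 := hker0 _ a.2 h2
        exact Submodule.mem_bot ℂ |>.mpr (Subtype.ext h3)
      exact LinearMap.ker_eq_bot.mp hkerφ
    · obtain ⟨c, hc, hbd⟩ := bdd_below_of_no_seq hns
      exact ranClosed hAc l hM hc hbd

end Paper
end
end
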